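/- arXiv:2209.04279 — 4 statements merged into one kernel-verified Lean document; each statement's English description precedes it below -/
import Mathlib

section
/- Assume k(s) > 0 for all s. There exists R > 0 such that for every ρ ∈ ℝ with |ρ| > R, the loop s ↦ α(s) + ρ n(s) avoids the origin and its winding number about the origin equals the rotation index r^α of α. -/
/-- `IsWinding l γ w` says that the `l`-periodic loop `γ : ℝ → ℂ ∖ {0}` has winding
number `w` about the origin: there is a continuous angle lift `θ` with
`γ(s) = |γ(s)|·e^{iθ(s)}` and `θ(l) − θ(0) = 2πw`. -/
def IsWinding (l : ℝ) (γ : ℝ → ℂ) (w : ℤ) : Prop :=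
  ∃ θ : ℝ → ℝ, Continuous θ ∧
    (∀ s, γ s = ((‖γ s‖ : ℝ) : ℂ) * Complex.exp ((θ s : ℂ) * Complex.I)) ∧
    θ l - θ 0 = 2 * Real.pi * w

/-- For `|ρ|` large the loop `s ↦ α(s) + ρ·n(s)` avoids the origin and winds about
the origin exactly `r^α` times, where `r^α = wind(α')` is the rotation index. -/
theorem winding_at_infinity_eq_rotation_index
    (l : ℝ) (hl : 0 < l) (α : ℝ → ℂ)
    (hα : ContDiff ℝ (⊤ : ℕ∞) α)
    (hper : Function.Periodic α l)
    (hunit : ∀ s, ‖deriv α s‖ = 1)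
    (k : ℝ → ℝ)
    (hk : ∀ s, deriv (deriv α) s = (k s : ℂ) * (Complex.I * deriv α s))
    (hkpos : ∀ s, 0 < k s)
    (rα : ℤ) (hrα : IsWinding l (deriv α) rα) :
    ∃ R > (0 : ℝ), ∀ ρ : ℝ, R < |ρ| →
      (∀ s, α s + (ρ : ℂ) * (Complex.I * deriv α s) ≠ 0) ∧
      IsWinding l (fun s => α s + (ρ : ℂ) * (Complex.I * deriv α s)) rα := by
  obtain ⟨θ, hθc, hθeq, hθl⟩ := hrα
  have hde : ∀ s, deriv α s = Complex.exp ((θ s : ℂ) * Complex.I) := by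
    intro s
    have h1 : ((‖deriv α s‖ : ℝ) : ℂ) = 1 := by
      rw [hunit s]; norm_num
    rw [hθeq s, h1, one_mul]
  -- bound on α
  obtain ⟨M, hM0, hM⟩ : ∃ M, 0 ≤ M ∧ ∀ s, ‖α s‖ ≤ M := by
    obtain ⟨C, hC⟩ := (isCompact_Icc (a := (0:ℝ)) (b := l)).exists_bound_of_continuousOn
      hα.continuous.continuousOn
    refine ⟨max C 0, le_max_right _ _, fun s => ?_⟩
    obtain ⟨t, ht, hts⟩ := hper.exists_mem_Ico₀ hl s
    rw [hts]
    exact le_trans (hC t ⟨ht.1, ht.2.le⟩) (le_max_left _ _)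
  refine ⟨M + 1, by linarith, fun ρ hρ => ?_⟩
  have hρ1 : (1 : ℝ) < |ρ| := by linarith
  have hρ0 : ρ ≠ 0 := by
    rintro rfl; simp at hρ1; linarith
  set c : ℂ := (ρ : ℂ) * Complex.I with hc
  have hcabs : ‖c‖ = |ρ| := by
    simp [hc]
  have hc0 : c ≠ 0 := by
    simp [hc, hρ0, Complex.I_ne_zero]
  -- nonvanishing
  have hnz : ∀ s, α s + (ρ : ℂ) * (Complex.I * deriv α s) ≠ 0 := by
    intro s h
    have h3 : (ρ : ℂ) * (Complex.I * deriv α s) = -α s := by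
      linear_combination h
    have h2 : ‖(ρ : ℂ) * (Complex.I * deriv α s)‖ = |ρ| := by
      simp [norm_mul, hunit s]
    rw [h3, norm_neg] at h2
    have := hM s
    linarith [h2 ▸ this]
  refine ⟨hnz, ?_⟩
  -- the perturbation u
  set u : ℝ → ℂ := fun s => α s * Complex.exp (-(θ s : ℂ) * Complex.I) / c with hu
  have huabs : ∀ s, ‖u s‖ < 1 := by
    intro s
    have habse : ‖Complex.exp (-(θ s : ℂ) * Complex.I)‖ = 1 := by
      rw [Complex.norm_exp]
      simp
    have : ‖u s‖ = ‖α s‖ / |ρ| := by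
      rw [hu]
      simp only [norm_div, norm_mul, habse, hcabs, mul_one]
    rw [this, div_lt_one (by linarith)]
    linarith [hM s]
  have hure : ∀ s, 0 < (1 + u s).re := by
    intro s
    have h1 : |(u s).re| ≤ ‖u s‖ := Complex.abs_re_le_norm _
    have := huabs s
    have := abs_le.mp h1
    simp only [Complex.add_re, Complex.one_re]
    linarith [this.1]
  have huslit : ∀ s, (1 + u s) ∈ Complex.slitPlane := by
    intro s
    exact Complex.mem_slitPlane_of_norm_lt_one (huabs s)
  -- key factorization
  have key : ∀ s, α s + (ρ : ℂ) * (Complex.I * deriv α s)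
      = c * Complex.exp ((θ s : ℂ) * Complex.I) * (1 + u s) := by
    intro s
    rw [hde s, hu]
    have hee : Complex.exp ((θ s : ℂ) * Complex.I) * Complex.exp (-(θ s : ℂ) * Complex.I) = 1 := by
      rw [← Complex.exp_add]; ring_nf; exact Complex.exp_zero
    field_simp [hc]
    simp only [neg_mul] at hee ⊢
    rw [mul_comm Complex.I (θ s : ℂ)]
    linear_combination (-α s) * hee
  -- continuity of u and of arg (1 + u)
  have hucont : Continuous u := by
    rw [hu]
    exact ((hα.continuous.mul (Complex.continuous_exp.comp
      (((Complex.continuous_ofReal.comp hθc).neg).mul continuous_const))).div_const c)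
  have hargcont : Continuous fun s => (1 + u s).arg := by
    rw [continuous_iff_continuousAt]
    intro s
    exact ContinuousAt.comp (g := Complex.arg) (f := fun t => 1 + u t)
      (Complex.continuousAt_arg (huslit s)) ((continuous_const.add hucont).continuousAt)
  -- the new angle function
  refine ⟨fun s => θ s + c.arg + (1 + u s).arg,
    (hθc.add continuous_const).add hargcont, fun s => ?_, ?_⟩
  · -- exponential identity
    have h1u0 : (1 + u s) ≠ 0 := by
      intro h
      have := hure s
      rw [h] at this
      simp at this
    have habs : ‖α s + (ρ : ℂ) * (Complex.I * deriv α s)‖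
        = ‖c‖ * ‖1 + u s‖ := by
      rw [key s, norm_mul, norm_mul, Complex.norm_exp]
      simp
    show α s + (ρ : ℂ) * (Complex.I * deriv α s) = _
    rw [key s, habs]
    have e1 := Complex.norm_mul_exp_arg_mul_I c
    have e2 := Complex.norm_mul_exp_arg_mul_I (1 + u s)
    conv_lhs => rw [← e1, ← e2]
    push_cast
    rw [add_mul, add_mul, Complex.exp_add, Complex.exp_add]
    ring
  · -- the total angle change
    have hul : u l = u 0 := by
      have hαl : α l = α 0 := by
        have := hper 0
        simpa using this
      have hθexp : Complex.exp (-(θ l : ℂ) * Complex.I) = Complex.exp (-(θ 0 : ℂ) * Complex.I) := by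
        have hθlv : (θ l : ℝ) = θ 0 + 2 * Real.pi * rα := by linarith
        rw [hθlv]
        have h2 : (-(((θ 0 + 2 * Real.pi * rα : ℝ)) : ℂ)) * Complex.I
            = -((θ 0 : ℝ) : ℂ) * Complex.I + (-rα : ℤ) * (2 * Real.pi * Complex.I) := by
          push_cast; ring
        rw [h2, Complex.exp_add, Complex.exp_int_mul_two_pi_mul_I, mul_one]
      rw [hu]
      simp only
      rw [hαl, hθexp]
    show θ l + c.arg + (1 + u l).arg - (θ 0 + c.arg + (1 + u 0).arg) = 2 * Real.pi * rα
    rw [hul]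
    push_cast
    linarith [hθl]
end

section
/- Assume k(s) > 0 for all s and let p ∈ ℝ² lie neither on the image of α nor on the image of the evolute β. Let n_p be the number of s ∈ [0,l) such that (α(s) − p)·α'(s) = 0 and ρ_s < 1/k(s), where ρ_s = (p − α(s))·n(s) (i.e. the number of normal segments of α through p, a normal segment being the portion of the normal line with −∞ < ρ < 1/k(s)). Then the winding number of the evolute about p satisfies w^β_p = r^α − n_p. -/
/-- The real dot product on `ℂ ≅ ℝ²`. -/
noncomputable def dotR (z w : ℂ) : ℝ := z.re * w.re + z.im * w.im

open Set Filter Topology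

/-- If a continuous function crosses the level `d` only strictly downward,
then once it has hit `d` it stays strictly below `d`. -/
lemma onceBelow (φ : ℝ → ℝ) (hφ : Continuous φ) (d : ℝ)
    (hloc : ∀ s, φ s = d → ∃ ε > 0,
      (∀ t, s - ε < t → t < s → d < φ t) ∧ (∀ t, s < t → t < s + ε → φ t < d)) :
    ∀ s t, φ s = d → s < t → φ t < d := by
  intro s t hs hst
  by_contra hge
  push_neg at hge
  set A : Set ℝ := {r | r ∈ Set.Ioc s t ∧ d ≤ φ r} with hA
  have htA : t ∈ A := ⟨⟨hst, le_rfl⟩, hge⟩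
  have hne : A.Nonempty := ⟨t, htA⟩
  have hbdd : BddBelow A := ⟨s, fun r hr => le_of_lt hr.1.1⟩
  obtain ⟨ε, hε, hbef, haft⟩ := hloc s hs
  set u := sInf A with hu
  have hut : u ≤ t := csInf_le hbdd htA
  have hlbA : ∀ r ∈ A, min (s + ε) t ≤ r := by
    intro r hr
    rcases le_or_gt (s + ε) r with h | h
    · exact le_trans (min_le_left _ _) h
    · exact absurd hr.2 (not_le.mpr (haft r hr.1.1 h))
  have hsu : s < u :=
    lt_of_lt_of_le (lt_min (by linarith) hst) (le_csInf hne hlbA)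
  -- φ u ≥ d
  have hclos : u ∈ closure A := csInf_mem_closure hne hbdd
  have hsub : closure A ⊆ {r | d ≤ φ r} :=
    closure_minimal (fun r hr => hr.2) (isClosed_le continuous_const hφ)
  have hφu_ge : d ≤ φ u := hsub hclos
  -- φ < d on (s, u)
  have hlt : ∀ r, s < r → r < u → φ r < d := by
    intro r hsr hru
    by_contra hge'
    push_neg at hge'
    exact absurd (csInf_le hbdd ⟨⟨hsr, le_of_lt (lt_of_lt_of_le hru hut)⟩, hge'⟩)
      (not_le.mpr hru)
  -- φ u ≤ d by left limit
  have hφu_le : φ u ≤ d := by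
    have hcl : u ∈ closure (Set.Ioo s u) := by
      rw [closure_Ioo (ne_of_lt hsu)]; exact ⟨le_of_lt hsu, le_rfl⟩
    have hne' : (𝓝[Set.Ioo s u] u).NeBot := mem_closure_iff_nhdsWithin_neBot.mp hcl
    refine le_of_tendsto (hφ.continuousWithinAt (s := Set.Ioo s u)) ?_
    filter_upwards [self_mem_nhdsWithin] with r hr
    exact le_of_lt (hlt r hr.1 hr.2)
  have hφu : φ u = d := le_antisymm hφu_le hφu_ge
  obtain ⟨ε', hε', hbef', -⟩ := hloc u hφu
  set r := max ((s + u) / 2) (u - ε' / 2) with hr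
  have hrs : s < r := lt_of_lt_of_le (by linarith) (le_max_left _ _)
  have hru : r < u := max_lt (by linarith) (by linarith)
  have hre : u - ε' < r := lt_of_lt_of_le (by linarith) (le_max_right _ _)
  exact absurd (hbef' r hre hru) (not_lt.mpr (le_of_lt (hlt r hrs hru)))

/-- If a continuous function crosses the level `d` only strictly downward,
then before hitting `d` it is strictly above `d`. -/
lemma onceAbove (φ : ℝ → ℝ) (hφ : Continuous φ) (d : ℝ)
    (hloc : ∀ s, φ s = d → ∃ ε > 0,
      (∀ t, s - ε < t → t < s → d < φ t) ∧ (∀ t, s < t → t < s + ε → φ t < d)) :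
    ∀ s t, φ s = d → t < s → d < φ t := by
  intro s t hs hts
  by_contra hle
  push_neg at hle
  rcases eq_or_lt_of_le hle with heq | hlt
  · exact absurd hs (ne_of_lt (onceBelow φ hφ d hloc t s heq hts))
  · obtain ⟨ε, hε, hbef, -⟩ := hloc s hs
    set r := max ((t + s) / 2) (s - ε / 2) with hr
    have hrt : t < r := lt_of_lt_of_le (by linarith) (le_max_left _ _)
    have hrs : r < s := max_lt (by linarith) (by linarith)
    have hre : s - ε < r := lt_of_lt_of_le (by linarith) (le_max_right _ _)
    have hφr : d < φ r := hbef r hre hrs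
    have hmem : d ∈ Set.Icc (φ t) (φ r) := ⟨le_of_lt hlt, le_of_lt hφr⟩
    obtain ⟨u, hu, hφu⟩ := intermediate_value_Icc (le_of_lt hrt) hφ.continuousOn hmem
    have : φ s < d := onceBelow φ hφ d hloc u s hφu (lt_of_le_of_lt hu.2 hrs)
    exact absurd hs (ne_of_lt this)

open Real in
/-- Abstract counting: if a continuous `φ` crosses every level in `π/2 + 2πℤ`
only strictly downward, then the number of times it takes such values on `[0,l)`
is `-(the total winding)`, which in particular is nonnegative. -/
lemma count_crossings (l : ℝ) (hl : 0 < l) (φ : ℝ → ℝ) (hφ : Continuous φ) (m : ℤ)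
    (hm : φ l - φ 0 = 2 * π * m)
    (hloc : ∀ s, (∃ j : ℤ, φ s = π / 2 + 2 * π * j) → ∃ ε > 0,
      (∀ t, s - ε < t → t < s → φ s < φ t) ∧ (∀ t, s < t → t < s + ε → φ t < φ s)) :
    m ≤ 0 ∧
      {s ∈ Set.Ico 0 l | ∃ j : ℤ, φ s = π / 2 + 2 * π * j}.ncard = (-m).toNat := by
  have hπ : (0:ℝ) < π := Real.pi_pos
  set P : ℝ → Prop := fun x => ∃ j : ℤ, x = π / 2 + 2 * π * j with hP
  have hlocd : ∀ d, P d → ∀ s, φ s = d → ∃ ε > 0,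
      (∀ t, s - ε < t → t < s → d < φ t) ∧ (∀ t, s < t → t < s + ε → φ t < d) := by
    intro d hd s hs
    obtain ⟨ε, hε, h1, h2⟩ := hloc s (hs ▸ hd)
    exact ⟨ε, hε, fun t h h' => hs ▸ h1 t h h', fun t h h' => hs ▸ h2 t h h'⟩
  have haft : ∀ d, P d → ∀ s t, φ s = d → s < t → φ t < d :=
    fun d hd => onceBelow φ hφ d (hlocd d hd)
  have hbef : ∀ d, P d → ∀ s t, φ s = d → t < s → d < φ t :=
    fun d hd => onceAbove φ hφ d (hlocd d hd)
  -- no level in `P` strictly between `φ 0` (exclusive) and up can be hit later: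
  -- first show m ≤ 0
  have hm0 : m ≤ 0 := by
    by_contra hpos
    push_neg at hpos
    have h2π : (0:ℝ) < 2 * π := by linarith
    obtain ⟨n₁, hfl, hfu⟩ : ∃ n : ℤ, (n:ℝ) * (2 * π) ≤ φ 0 - π / 2 ∧
        φ 0 - π / 2 < ((n:ℝ) + 1) * (2 * π) := by
      refine ⟨⌊(φ 0 - π / 2) / (2 * π)⌋, ?_, ?_⟩
      · exact (le_div_iff₀ h2π).mp (Int.floor_le _)
      · exact (div_lt_iff₀ h2π).mp (Int.lt_floor_add_one _)
    have hPd : P (π / 2 + 2 * π * ((n₁:ℝ) + 1)) := ⟨n₁ + 1, by push_cast; ring⟩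
    have hd0 : φ 0 < π / 2 + 2 * π * ((n₁:ℝ) + 1) := by nlinarith
    have hdl : π / 2 + 2 * π * ((n₁:ℝ) + 1) ≤ φ l := by
      have h3 : (1:ℝ) ≤ (m:ℝ) := by exact_mod_cast hpos
      nlinarith
    rcases eq_or_lt_of_le hdl with heq | hlt
    · exact absurd (hbef _ hPd l 0 heq.symm hl) (not_lt.mpr (le_of_lt hd0))
    · obtain ⟨s, hs, hφs⟩ := intermediate_value_Ioo (le_of_lt hl) hφ.continuousOn ⟨hd0, hlt⟩
      exact absurd (haft _ hPd s l hφs hs.2) (not_lt.mpr (le_of_lt hlt))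
  refine ⟨hm0, ?_⟩
  have h2π : (0:ℝ) < 2 * π := by linarith
  set q : ℕ := (-m).toNat with hq
  have hmq : (m:ℝ) = -(q:ℝ) := by
    have : ((-m).toNat : ℤ) = -m := Int.toNat_of_nonneg (neg_nonneg.mpr hm0)
    push_cast [hq]
    exact_mod_cast (by linarith [this] : (m:ℤ) = -((-m).toNat : ℤ))
  have hφ0 : φ 0 = φ l + 2 * π * q := by
    rw [hmq] at hm; linarith
  classical
  set S := {s ∈ Set.Ico 0 l | P (φ s)} with hS
  set Tgt := {x | P x ∧ x ∈ Set.Ioc (φ l) (φ 0)} with hTgt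
  have hmaps : ∀ s ∈ S, φ s ∈ Tgt := by
    rintro s ⟨⟨hs0, hsl⟩, hPs⟩
    refine ⟨hPs, haft _ hPs s l rfl hsl, ?_⟩
    rcases eq_or_lt_of_le hs0 with heq | hgt
    · exact le_of_eq (by rw [heq])
    · exact le_of_lt (hbef _ hPs s 0 rfl hgt)
  have hinj : Set.InjOn φ S := by
    rintro s ⟨⟨hs0, hsl⟩, hPs⟩ t ⟨⟨ht0, htl⟩, hPt⟩ hst
    by_contra hne
    rcases lt_or_gt_of_ne hne with h | h
    · exact absurd (haft _ hPs s t rfl h) (not_lt.mpr (le_of_eq hst))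
    · exact absurd (haft _ hPt t s rfl h) (not_lt.mpr (le_of_eq hst.symm))
  have himg : φ '' S = Tgt := by
    apply Set.Subset.antisymm
    · rintro x ⟨s, hs, rfl⟩; exact hmaps s hs
    · rintro x ⟨hPx, hxl, hx0⟩
      rcases eq_or_lt_of_le hx0 with heq | hlt
      · exact ⟨0, ⟨⟨le_rfl, hl⟩, heq ▸ hPx⟩, heq.symm⟩
      · obtain ⟨s, hs, hφs⟩ :=
          intermediate_value_Ioo' (le_of_lt hl) hφ.continuousOn ⟨hxl, hlt⟩
        exact ⟨s, ⟨⟨le_of_lt hs.1, hs.2⟩, hφs ▸ hPx⟩, hφs⟩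
  -- count the target set
  have hTgt_eq : Tgt = (fun j : ℤ => π / 2 + 2 * π * (j:ℝ)) ''
      (Set.Icc (⌊(φ l - π / 2) / (2 * π)⌋ + 1) (⌊(φ l - π / 2) / (2 * π)⌋ + q)) := by
    ext x
    constructor
    · rintro ⟨⟨j, rfl⟩, hxl, hx0⟩
      refine ⟨j, ⟨?_, ?_⟩, rfl⟩
      · have : (φ l - π / 2) / (2 * π) < (j:ℝ) := by
          rw [div_lt_iff₀ h2π]; linarith
        exact Int.add_one_le_iff.mpr (Int.floor_lt.mpr this)
      · have : ((j:ℝ) - q) ≤ (φ l - π / 2) / (2 * π) := by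
          rw [le_div_iff₀ h2π]; rw [hφ0] at hx0; linarith
        have := Int.le_floor.mpr (by push_cast; linarith : ((j - q : ℤ):ℝ) ≤ (φ l - π / 2) / (2 * π))
        linarith [this]
    · rintro ⟨j, ⟨hj1, hj2⟩, rfl⟩
      refine ⟨⟨j, rfl⟩, ?_, ?_⟩
      · have h1 : (φ l - π / 2) / (2 * π) < ((⌊(φ l - π / 2) / (2 * π)⌋ + 1 : ℤ):ℝ) := by
          push_cast; exact Int.lt_floor_add_one _
        have h2 : ((⌊(φ l - π / 2) / (2 * π)⌋ + 1 : ℤ):ℝ) ≤ (j:ℝ) := by exact_mod_cast hj1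
        have := (div_lt_iff₀ h2π).mp (lt_of_lt_of_le h1 h2)
        linarith
      · have h1 : ((j:ℝ) - q) ≤ (φ l - π / 2) / (2 * π) := by
          have : ((j - q : ℤ):ℝ) ≤ ((⌊(φ l - π / 2) / (2 * π)⌋ : ℤ):ℝ) := by
            exact_mod_cast (by linarith : (j - q : ℤ) ≤ ⌊(φ l - π / 2) / (2 * π)⌋)
          calc ((j:ℝ) - q) = ((j - q : ℤ):ℝ) := by push_cast; ring
            _ ≤ _ := this
            _ ≤ _ := Int.floor_le _
        have := (le_div_iff₀ h2π).mp h1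
        rw [hφ0]; linarith
  have hcount : Tgt.ncard = q := by
    rw [hTgt_eq]
    rw [Set.ncard_image_of_injective _ (fun i j hij => by
      have : (i:ℝ) = (j:ℝ) := by
        have h := hij
        nlinarith [Real.pi_pos]
      exact_mod_cast this)]
    rw [← Finset.coe_Icc, Set.ncard_coe_finset, Int.card_Icc]
    simp
  calc S.ncard = (φ '' S).ncard := (Set.ncard_image_of_injOn hinj).symm
    _ = Tgt.ncard := by rw [himg]
    _ = q := hcount


section MainProof
open Complex Real Filter Topology Set

set_option maxHeartbeats 3200000

/-- Theorem 3 of the paper. -/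
theorem evolute_winding_eq_rotation_sub_normal_segments
    (l : ℝ) (hl : 0 < l) (α : ℝ → ℂ)
    (hα : ContDiff ℝ (⊤ : ℕ∞) α)
    (hper : Function.Periodic α l)
    (hunit : ∀ s, ‖deriv α s‖ = 1)
    (k : ℝ → ℝ)
    (hk : ∀ s, deriv (deriv α) s = (k s : ℂ) * (Complex.I * deriv α s))
    (hkpos : ∀ s, 0 < k s)
    (β : ℝ → ℂ)
    (hβ : ∀ s, β s = α s + ((1 / k s : ℝ) : ℂ) * (Complex.I * deriv α s))
    (p : ℂ)
    (hpα : p ∉ Set.range α) (hpβ : p ∉ Set.range β)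
    (ρ : ℝ → ℝ) (hρ : ∀ s, ρ s = dotR (p - α s) (Complex.I * deriv α s))
    (np : ℕ)
    (hnp : np = {s ∈ Set.Ico 0 l |
        dotR (α s - p) (deriv α s) = 0 ∧ ρ s < 1 / k s}.ncard)
    (rα : ℤ) (hrα : IsWinding l (deriv α) rα)
    (wβ : ℤ) (hwβ : IsWinding l (fun s => β s - p) wβ) :
    wβ = rα - np := by
  have hπ : (0:ℝ) < π := Real.pi_pos
  -- basic differentiability
  have hα' : ContDiff ℝ (⊤:ℕ∞) α := hα.of_le (by simp)
  have hdiff : Differentiable ℝ α := hα'.differentiable (by simp)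
  have hTcd : ContDiff ℝ (⊤:ℕ∞) (deriv α) := (contDiff_infty_iff_deriv.mp hα').2
  have hTdiff : Differentiable ℝ (deriv α) := hTcd.differentiable (by simp)
  have hT' : ∀ s, HasDerivAt (deriv α) ((k s : ℂ) * (Complex.I * deriv α s)) s :=
    fun s => hk s ▸ (hTdiff s).hasDerivAt
  have habs : ∀ s, ‖deriv α s‖ = 1 := fun s => by
    exact hunit s
  have hsq : ∀ s, (deriv α s).re ^ 2 + (deriv α s).im ^ 2 = 1 := fun s => by
    have h := habs s
    have := Complex.sq_norm (deriv α s)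
    rw [h] at this
    have h2 := this.symm
    simpa [Complex.normSq_apply, sq] using h2
  have hβne : ∀ s, β s - p ≠ 0 := fun s =>
    sub_ne_zero.mpr (fun h => hpβ ⟨s, h⟩)
  have hrpos : ∀ s, 0 < ‖β s - p‖ := fun s =>
    norm_pos_iff.mpr (hβne s)
  -- continuity of k and β
  have hT''cont : Continuous (deriv (deriv α)) :=
    ((contDiff_infty_iff_deriv.mp hTcd).2).continuous
  have hkcont : Continuous k := by
    have hkeq : ∀ s, k s = (deriv (deriv α) s *
        (starRingEnd ℂ) (Complex.I * deriv α s)).re := by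
      intro s
      rw [hk s]
      have : ((k s : ℂ) * (Complex.I * deriv α s) *
          (starRingEnd ℂ) (Complex.I * deriv α s)) =
          (k s : ℂ) * ((Complex.I * deriv α s) *
            (starRingEnd ℂ) (Complex.I * deriv α s)) := by ring
      rw [this, Complex.mul_conj]
      simp only [Complex.mul_re, Complex.ofReal_re, Complex.ofReal_im,
        Complex.normSq_apply, Complex.mul_im, Complex.I_re, Complex.I_im]
      linear_combination (-(k s)) * hsq s
    rw [funext hkeq]
    fun_prop
  have hβcont : Continuous β := by
    rw [funext hβ]
    have h1 : Continuous fun s => (1 / k s : ℝ) :=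
      continuous_const.div hkcont (fun s => ne_of_gt (hkpos s))
    fun_prop
  -- tangential and normal components
  set a : ℝ → ℝ := fun s => ((α s - p) * (starRingEnd ℂ) (deriv α s)).re with ha_def
  set c : ℝ → ℝ := fun s => ((β s - p) * (starRingEnd ℂ) (deriv α s)).im with hc_def
  have hz_re : ∀ s, ((β s - p) * (starRingEnd ℂ) (deriv α s)).re = a s := by
    intro s
    rw [hβ s, ha_def]
    simp only [Complex.mul_re, Complex.sub_re, Complex.sub_im, Complex.add_re,
      Complex.add_im, Complex.mul_im, Complex.conj_re, Complex.conj_im,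
      Complex.ofReal_re, Complex.ofReal_im, Complex.I_re, Complex.I_im]
    ring_nf
  have hc_eq : ∀ s, c s = 1 / k s - ρ s := by
    intro s
    rw [hc_def]
    beta_reduce
    rw [hρ s, hβ s, dotR]
    simp only [Complex.mul_re, Complex.sub_re, Complex.sub_im, Complex.add_re,
      Complex.add_im, Complex.mul_im, Complex.conj_re, Complex.conj_im,
      Complex.ofReal_re, Complex.ofReal_im, Complex.I_re, Complex.I_im]
    ring_nf
    linear_combination (1 / k s) * hsq s
  have ha_eq : ∀ s, dotR (α s - p) (deriv α s) = a s := by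
    intro s
    rw [dotR, ha_def]
    simp only [Complex.mul_re, Complex.sub_re, Complex.sub_im,
      Complex.conj_re, Complex.conj_im]
    ring
  -- the derivative of a
  have hre' : ∀ (f : ℝ → ℂ) (f' : ℂ) (x : ℝ), HasDerivAt f f' x →
      HasDerivAt (fun s => (f s).re) f'.re x := fun f f' x hf =>
    (Complex.reCLM.hasFDerivAt.comp_hasDerivAt x hf)
  have him' : ∀ (f : ℝ → ℂ) (f' : ℂ) (x : ℝ), HasDerivAt f f' x →
      HasDerivAt (fun s => (f s).im) f'.im x := fun f f' x hf =>
    (Complex.imCLM.hasFDerivAt.comp_hasDerivAt x hf)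
  have ha' : ∀ s, HasDerivAt a (k s * c s) s := by
    intro s
    have h1 : HasDerivAt (fun t => α t - p) (deriv α s) s := (hdiff s).hasDerivAt.sub_const p
    have hre1 : HasDerivAt (fun t => (α t - p).re) (deriv α s).re s := hre' _ _ s h1
    have him1 : HasDerivAt (fun t => (α t - p).im) (deriv α s).im s := him' _ _ s h1
    have hre2 : HasDerivAt (fun t => (deriv α t).re)
        ((k s : ℂ) * (Complex.I * deriv α s)).re s := hre' _ _ s (hT' s)
    have him2 : HasDerivAt (fun t => (deriv α t).im)
        ((k s : ℂ) * (Complex.I * deriv α s)).im s := him' _ _ s (hT' s)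
    have hprod := (hre1.mul hre2).add (him1.mul him2)
    have heq : a = fun t => (α t - p).re * (deriv α t).re + (α t - p).im * (deriv α t).im := by
      funext t
      rw [ha_def]
      simp only [Complex.mul_re, Complex.conj_re, Complex.conj_im]
      ring
    rw [heq]
    convert hprod using 1
    case e'_4 => rfl
    case e'_5 => rfl
    case e'_8 => rfl
    rw [hc_eq s, hρ s, dotR]
    simp only [Complex.mul_re, Complex.mul_im, Complex.sub_re, Complex.sub_im,
      Complex.ofReal_re, Complex.ofReal_im, Complex.I_re, Complex.I_im]
    linear_combination (-1 : ℝ) * hsq s + mul_inv_cancel₀ (ne_of_gt (hkpos s))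
  -- the angle functions
  obtain ⟨θT, hθTc, hθT, hθTl⟩ := hrα
  obtain ⟨θβ, hθβc, hθβ, hθβl⟩ := hwβ
  set φ : ℝ → ℝ := fun s => θβ s - θT s with hφ_def
  have hφc : Continuous φ := hθβc.sub hθTc
  have hm : φ l - φ 0 = 2 * π * ((wβ - rα : ℤ) : ℝ) := by
    simp only [hφ_def]
    push_cast
    linarith
  -- polar representation of z
  have hzrep : ∀ s, (β s - p) * (starRingEnd ℂ) (deriv α s) =
      ((‖β s - p‖ : ℝ) : ℂ) * Complex.exp ((φ s : ℂ) * Complex.I) := by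
    intro s
    have h1 := hθβ s
    have h2 := hθT s
    rw [habs s] at h2
    simp only at h1
    conv_lhs => rw [h1, h2]
    rw [Complex.ofReal_one, one_mul, ← Complex.exp_conj]
    have hconj : (starRingEnd ℂ) ((θT s : ℂ) * Complex.I) = -((θT s : ℂ) * Complex.I) := by
      simp [Complex.conj_ofReal]
    rw [hconj, mul_assoc, ← Complex.exp_add]
    congr 1
    push_cast [hφ_def]
    ring
  have har : ∀ s, a s = ‖β s - p‖ * Real.cos (φ s) := by
    intro s
    rw [← hz_re s, hzrep s]
    simp [Complex.mul_re, Complex.exp_ofReal_mul_I_re, Complex.exp_ofReal_mul_I_im]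
  have hcr : ∀ s, c s = ‖β s - p‖ * Real.sin (φ s) := by
    intro s
    rw [hc_def]
    beta_reduce
    rw [hzrep s]
    simp [Complex.mul_im, Complex.exp_ofReal_mul_I_re, Complex.exp_ofReal_mul_I_im]
  -- local downward-crossing property
  have hloc : ∀ s₀, (∃ j : ℤ, φ s₀ = π / 2 + 2 * π * j) → ∃ ε > 0,
      (∀ t, s₀ - ε < t → t < s₀ → φ s₀ < φ t) ∧
      (∀ t, s₀ < t → t < s₀ + ε → φ t < φ s₀) := by
    rintro s₀ ⟨j, hj⟩
    have hcos0 : Real.cos (φ s₀) = 0 := by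
      rw [hj, show π / 2 + 2 * π * (j:ℝ) = π / 2 + (j:ℝ) * (2 * π) by ring,
        Real.cos_add_int_mul_two_pi, Real.cos_pi_div_two]
    have hsin1 : Real.sin (φ s₀) = 1 := by
      rw [hj, show π / 2 + 2 * π * (j:ℝ) = π / 2 + (j:ℝ) * (2 * π) by ring,
        Real.sin_add_int_mul_two_pi, Real.sin_pi_div_two]
    have ha0 : a s₀ = 0 := by rw [har s₀, hcos0, mul_zero]
    have hc0 : 0 < c s₀ := by rw [hcr s₀, hsin1, mul_one]; exact hrpos s₀
    have hdpos : 0 < k s₀ * c s₀ := mul_pos (hkpos s₀) hc0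
    have hslope : ∀ᶠ t in nhdsWithin s₀ {s₀}ᶜ, 0 < slope a s₀ t :=
      (hasDerivAt_iff_tendsto_slope.mp (ha' s₀)).eventually (eventually_gt_nhds hdpos)
    rw [eventually_nhdsWithin_iff] at hslope
    obtain ⟨ε₁, hε₁, hs1⟩ := Metric.eventually_nhds_iff.mp hslope
    obtain ⟨δ, hδ, hd2⟩ := Metric.continuousAt_iff.mp (hφc.continuousAt (x := s₀))
      (π / 2) (by linarith)
    refine ⟨min ε₁ δ, lt_min hε₁ hδ, ?_, ?_⟩
    · intro t h1 h2
      have hdist : dist t s₀ < ε₁ := by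
        rw [Real.dist_eq, abs_of_neg (by linarith : t - s₀ < 0)]
        have := min_le_left ε₁ δ; linarith
      have hδdist : dist t s₀ < δ := by
        rw [Real.dist_eq, abs_of_neg (by linarith : t - s₀ < 0)]
        have := min_le_right ε₁ δ; linarith
      have hwin : |φ t - φ s₀| < π / 2 := by
        have := hd2 hδdist; rwa [Real.dist_eq] at this
      have hst := hs1 hdist (by simp [ne_of_lt h2])
      rw [slope_def_field, ha0, sub_zero] at hst
      have hat : a t < 0 := by
        rcases div_pos_iff.mp hst with ⟨hn, hd'⟩ | ⟨hn, hd'⟩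
        · linarith
        · linarith
      have hcoslt : Real.cos (φ t) < 0 := by
        have := har t
        nlinarith [hrpos t]
      by_contra hle
      push_neg at hle
      have hu1 : 0 ≤ φ s₀ - φ t := by linarith
      have hu2 : φ s₀ - φ t < π / 2 := by
        rcases abs_lt.mp hwin with ⟨h', h''⟩; linarith
      obtain ⟨u, hu⟩ : ∃ u, u = φ s₀ - φ t := ⟨_, rfl⟩
      have hφt : φ t = (π / 2 - u) + (j:ℝ) * (2 * π) := by
        rw [hu, hj]; ring
      have hceq : Real.cos (φ t) = Real.sin u := by
        rw [hφt, Real.cos_add_int_mul_two_pi, Real.cos_pi_div_two_sub]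
      have hsge : 0 ≤ Real.sin u :=
        Real.sin_nonneg_of_nonneg_of_le_pi (by rw [hu]; linarith) (by rw [hu]; linarith)
      linarith
    · intro t h1 h2
      have hdist : dist t s₀ < ε₁ := by
        rw [Real.dist_eq, abs_of_pos (by linarith : 0 < t - s₀)]
        have := min_le_left ε₁ δ; linarith
      have hδdist : dist t s₀ < δ := by
        rw [Real.dist_eq, abs_of_pos (by linarith : 0 < t - s₀)]
        have := min_le_right ε₁ δ; linarith
      have hwin : |φ t - φ s₀| < π / 2 := by
        have := hd2 hδdist; rwa [Real.dist_eq] at this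
      have hst := hs1 hdist (by simp [ne_of_gt h1])
      rw [slope_def_field, ha0, sub_zero] at hst
      have hat : 0 < a t := by
        rcases div_pos_iff.mp hst with ⟨hn, hd'⟩ | ⟨hn, hd'⟩
        · linarith
        · linarith
      have hcosgt : 0 < Real.cos (φ t) := by
        have := har t
        nlinarith [hrpos t]
      by_contra hle
      push_neg at hle
      have hu1 : 0 ≤ φ t - φ s₀ := by linarith
      have hu2 : φ t - φ s₀ < π / 2 := by
        rcases abs_lt.mp hwin with ⟨h', h''⟩; linarith
      obtain ⟨u, hu⟩ : ∃ u, u = φ t - φ s₀ := ⟨_, rfl⟩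
      have hφt : φ t = (π / 2 + u) + (j:ℝ) * (2 * π) := by
        rw [hu, hj]; ring
      have hcoseq : Real.cos (φ t) = -Real.sin u := by
        rw [hφt, Real.cos_add_int_mul_two_pi, Real.cos_add, Real.cos_pi_div_two,
          Real.sin_pi_div_two]
        ring
      have hsge : 0 ≤ Real.sin u :=
        Real.sin_nonneg_of_nonneg_of_le_pi (by rw [hu]; linarith) (by rw [hu]; linarith)
      linarith
  -- apply the counting lemma
  obtain ⟨hm0, hcount⟩ := count_crossings l hl φ hφc (wβ - rα)
    (by rw [hm]) hloc
  -- identify the sets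
  have hsets : {s ∈ Set.Ico 0 l | dotR (α s - p) (deriv α s) = 0 ∧ ρ s < 1 / k s} =
      {s ∈ Set.Ico 0 l | ∃ j : ℤ, φ s = π / 2 + 2 * π * (j:ℝ)} := by
    ext s
    simp only [Set.mem_setOf_eq]
    refine and_congr_right fun _ => ?_
    rw [ha_eq s]
    constructor
    · rintro ⟨h1, h2⟩
      have hcs : Real.cos (φ s) = 0 := by
        have := har s
        have h' := hrpos s
        rw [this] at h1
        rcases mul_eq_zero.mp h1 with h | h
        · exact absurd h (ne_of_gt h')
        · exact h
      have hsinpos : 0 < Real.sin (φ s) := by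
        have hcs' : 0 < c s := by rw [hc_eq s]; linarith
        rw [hcr s] at hcs'
        rcases mul_pos_iff.mp hcs' with ⟨h', h''⟩ | ⟨h', h''⟩
        · exact h''
        · exact absurd h' (not_lt.mpr (le_of_lt (hrpos s)))
      have hsin1 : Real.sin (φ s) = 1 := by
        have hpyth := Real.sin_sq_add_cos_sq (φ s)
        rw [hcs] at hpyth
        have : Real.sin (φ s) ^ 2 = 1 := by linarith
        have hfac : (Real.sin (φ s) - 1) * (Real.sin (φ s) + 1) = 0 := by nlinarith
        rcases mul_eq_zero.mp hfac with h | h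
        · linarith
        · linarith
      obtain ⟨jj, hjj⟩ := Real.sin_eq_one_iff.mp hsin1
      exact ⟨jj, by rw [← hjj]; ring⟩
    · rintro ⟨jj, hjj⟩
      have hcs : Real.cos (φ s) = 0 := by
        rw [hjj, show π / 2 + 2 * π * (jj:ℝ) = π / 2 + (jj:ℝ) * (2 * π) by ring,
          Real.cos_add_int_mul_two_pi, Real.cos_pi_div_two]
      have hss : Real.sin (φ s) = 1 := by
        rw [hjj, show π / 2 + 2 * π * (jj:ℝ) = π / 2 + (jj:ℝ) * (2 * π) by ring,
          Real.sin_add_int_mul_two_pi, Real.sin_pi_div_two]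
      constructor
      · rw [har s, hcs, mul_zero]
      · have : 0 < c s := by rw [hcr s, hss, mul_one]; exact hrpos s
        rw [hc_eq s] at this; linarith
  rw [hsets, hcount] at hnp
  omega


end MainProof
end

section
/- Assume k(s) > 0 for all s and let p ∈ ℝ² lie neither on the image of α nor on the image of the evolute β. Let N_p be the total number of s ∈ [0,l) with (α(s) − p)·α'(s) = 0 (the number of normals of α through p). Then N_p is even and the winding number of the evolute about p satisfies w^β_p = r^α − N_p/2. -/
open Real Set Filter Topology

private lemma cos_zero_form {a : ℝ} (h : Real.cos a = 0) : ∃ n : ℤ, a = π/2 + n * π := by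
  obtain ⟨n, hn⟩ := Real.cos_eq_zero_iff.mp h
  exact ⟨n, by push_cast [hn]; ring⟩

private lemma cos_zero_dist {a b : ℝ} (ha : Real.cos a = 0) (hb : Real.cos b = 0)
    (h : |a - b| < π) : a = b := by
  obtain ⟨n, hn⟩ := cos_zero_form ha
  obtain ⟨m, hm⟩ := cos_zero_form hb
  have hπ := Real.pi_pos
  have hab : a - b = ((n - m : ℤ) : ℝ) * π := by rw [hn, hm]; push_cast; ring
  rw [hab, abs_mul, abs_of_pos hπ] at h
  have h1 : |((n - m : ℤ) : ℝ)| < 1 := by nlinarith [abs_nonneg ((n - m : ℤ) : ℝ)]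
  have h2 : n - m = 0 := by
    have h3 : ((|n - m| : ℤ) : ℝ) < 1 := by rw [Int.cast_abs]; exact h1
    have : |n - m| < 1 := by exact_mod_cast h3
    exact Int.abs_lt_one_iff.mp this
  have : a - b = 0 := by rw [hab, h2]; simp
  linarith

private lemma cos_zero_between {u v : ℝ} (h : π < v - u) :
    ∃ z, Real.cos z = 0 ∧ u < z ∧ z < v := by
  have hπ := Real.pi_pos
  set n : ℤ := ⌊(u - π/2)/π⌋ + 1 with hn
  refine ⟨π/2 + n * π, ?_, ?_, ?_⟩
  · rw [Real.cos_eq_zero_iff]; exact ⟨n, by push_cast; ring⟩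
  · have := Int.lt_floor_add_one ((u - π/2)/π)
    have : (u - π/2)/π < (n : ℝ) := by push_cast [hn]; linarith
    have := (div_lt_iff₀ hπ).mp this
    linarith
  · have := Int.floor_le ((u - π/2)/π)
    have hle : ((n : ℝ) - 1) ≤ (u - π/2)/π := by push_cast [hn]; linarith
    have := (le_div_iff₀ hπ).mp hle
    nlinarith

private lemma cos_zero_pair {x c : ℝ} (hx : Real.cos x = 0) (hc : Real.cos c = 0)
    (h1 : c - π ≤ x) (h2 : x ≤ c) : x = c - π ∨ x = c := by
  have hπ := Real.pi_pos
  rcases lt_or_ge x (c - π/2) with h | h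
  · left
    have hcπ : Real.cos (c - π) = 0 := by
      rw [Real.cos_sub, Real.cos_pi, Real.sin_pi]; simp [hc]
    exact cos_zero_dist hx hcπ (abs_lt.mpr ⟨by linarith, by linarith⟩)
  · right
    exact cos_zero_dist hx hc (abs_lt.mpr ⟨by linarith, by linarith⟩)

private lemma eventually_lt_of_deriv_neg {ψ : ℝ → ℝ} {d a : ℝ} (h : HasDerivAt ψ d a)
    (hd : d < 0) : (∀ᶠ t in 𝓝[>] a, ψ t < ψ a) ∧ (∀ᶠ t in 𝓝[<] a, ψ a < ψ t) := by
  have hs := hasDerivAt_iff_tendsto_slope.mp h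
  have hev : ∀ᶠ t in 𝓝[≠] a, slope ψ a t < 0 :=
    hs.eventually (Filter.Tendsto.eventually_lt_const hd tendsto_id |>.mono (fun x hx => hx))
  constructor
  · have h1 : 𝓝[>] a ≤ 𝓝[≠] a := nhdsWithin_mono a (fun x hx => ne_of_gt hx)
    filter_upwards [h1 hev, self_mem_nhdsWithin] with t ht (ht2 : a < t)
    have := mul_neg_of_neg_of_pos ht (by linarith : (0:ℝ) < t - a)
    rw [slope_def_field] at ht
    have := (div_neg_iff.mp ht)
    rcases this with ⟨h3, h4⟩ | ⟨h3, h4⟩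
    · linarith
    · linarith
  · have h1 : 𝓝[<] a ≤ 𝓝[≠] a := nhdsWithin_mono a (fun x hx => ne_of_lt hx)
    filter_upwards [h1 hev, self_mem_nhdsWithin] with t ht (ht2 : t < a)
    rw [slope_def_field] at ht
    rcases div_neg_iff.mp ht with ⟨h3, h4⟩ | ⟨h3, h4⟩
    · linarith
    · linarith


private lemma eventually_lt_of_deriv_neg' {ψ : ℝ → ℝ} {d a : ℝ} (h : HasDerivAt ψ d a)
    (hd : d < 0) : (∀ᶠ t in 𝓝[>] a, ψ t < ψ a) ∧ (∀ᶠ t in 𝓝[<] a, ψ a < ψ t) := by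
  have hs := hasDerivAt_iff_tendsto_slope.mp h
  have hev : ∀ᶠ t in 𝓝[≠] a, slope ψ a t < 0 := hs.eventually_lt_const hd
  constructor
  · have h1 : 𝓝[>] a ≤ 𝓝[≠] a := nhdsWithin_mono a (fun x hx => ne_of_gt hx)
    filter_upwards [h1 hev, self_mem_nhdsWithin] with t ht (ht2 : a < t)
    rw [slope_def_field] at ht
    rcases div_neg_iff.mp ht with ⟨h3, h4⟩ | ⟨h3, h4⟩ <;> linarith
  · have h1 : 𝓝[<] a ≤ 𝓝[≠] a := nhdsWithin_mono a (fun x hx => ne_of_lt hx)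
    filter_upwards [h1 hev, self_mem_nhdsWithin] with t ht (ht2 : t < a)
    rw [slope_def_field] at ht
    rcases div_neg_iff.mp ht with ⟨h3, h4⟩ | ⟨h3, h4⟩ <;> linarith





section Counting
variable {ψ ψ' : ℝ → ℝ}


variable {ψ ψ' : ℝ → ℝ}

private lemma psi_cont (hd : ∀ s, HasDerivAt ψ (ψ' s) s) : Continuous ψ := by
  have : Differentiable ℝ ψ := fun s => (hd s).differentiableAt
  exact this.continuous

private lemma band (hd : ∀ s, HasDerivAt ψ (ψ' s) s)
    (hneg : ∀ s, Real.cos (ψ s) = 0 → ψ' s < 0)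
    {a b : ℝ} (hab : a < b) (ha : Real.cos (ψ a) = 0)
    (hnz : ∀ s ∈ Ioo a b, Real.cos (ψ s) ≠ 0) :
    ∀ t ∈ Ioo a b, ψ t ∈ Ioo (ψ a - π) (ψ a) := by
  have hcont := psi_cont hd
  intro t ht
  have hπ := Real.pi_pos
  -- find a point t₀ ∈ Ioo a t with ψ t₀ ∈ Ioo (ψ a - π) (ψ a)
  have hev1 : ∀ᶠ s in 𝓝[>] a, ψ s < ψ a :=
    (eventually_lt_of_deriv_neg' (hd a) (hneg a ha)).1
  have hev2 : ∀ᶠ s in 𝓝[>] a, ψ a - π < ψ s := by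
    have h2 : Tendsto ψ (𝓝[>] a) (𝓝 (ψ a)) :=
      (hcont.tendsto a).mono_left nhdsWithin_le_nhds
    exact h2.eventually_const_lt (by linarith)
  have hev3 : ∀ᶠ s in 𝓝[>] a, s ∈ Ioo a t := by
    exact Ioo_mem_nhdsGT_of_mem ⟨le_refl a, ht.1⟩
  obtain ⟨t₀, h1, h2, h3⟩ := (hev1.and (hev2.and hev3)).exists
  obtain ⟨ht₀1, ht₀2⟩ := h3
  have hsub : uIcc t₀ t ⊆ Ioo a b := by
    rw [uIcc_of_le (le_of_lt ht₀2)]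
    exact fun u hu => ⟨lt_of_lt_of_le ht₀1 hu.1, lt_of_le_of_lt hu.2 ht.2⟩
  constructor
  · by_contra hle
    push_neg at hle
    have hmem : ψ a - π ∈ uIcc (ψ t₀) (ψ t) := by
      rw [Set.mem_uIcc]; right; exact ⟨hle, by linarith⟩
    obtain ⟨u, hu, hψu⟩ := intermediate_value_uIcc (hcont.continuousOn) hmem
    exact hnz u (hsub hu) (by rw [hψu, Real.cos_sub_pi, ha, neg_zero])
  · by_contra hge
    push_neg at hge
    have hmem : ψ a ∈ uIcc (ψ t₀) (ψ t) := by
      rw [Set.mem_uIcc]; left; exact ⟨le_of_lt h1, hge⟩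
    obtain ⟨u, hu, hψu⟩ := intermediate_value_uIcc (hcont.continuousOn) hmem
    exact hnz u (hsub hu) (by rw [hψu]; exact ha)



private lemma step' (hd : ∀ s, HasDerivAt ψ (ψ' s) s)
    (hneg : ∀ s, Real.cos (ψ s) = 0 → ψ' s < 0)
    {a b : ℝ} (hab : a < b) (ha : Real.cos (ψ a) = 0)
    (hnz : ∀ s ∈ Ioo a b, Real.cos (ψ s) ≠ 0) :
    (Real.cos (ψ b) = 0 → ψ b = ψ a - π) ∧
    (Real.cos (ψ b) ≠ 0 → ψ b ∈ Ioo (ψ a - π) (ψ a)) := by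
  have hcont := psi_cont hd
  have hπ := Real.pi_pos
  have hband := band hd hneg hab ha hnz
  have hIcc : ψ b ∈ Icc (ψ a - π) (ψ a) := by
    have h1 : Tendsto ψ (𝓝[<] b) (𝓝 (ψ b)) :=
      (hcont.tendsto b).mono_left nhdsWithin_le_nhds
    have hev : ∀ᶠ t in 𝓝[<] b, ψ t ∈ Ioo (ψ a - π) (ψ a) := by
      filter_upwards [Ioo_mem_nhdsLT_of_mem (⟨hab, le_refl b⟩ : b ∈ Ioc a b)] with t ht
      exact hband t ht
    constructor
    · exact ge_of_tendsto h1 (hev.mono fun t ht => ht.1.le)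
    · exact le_of_tendsto h1 (hev.mono fun t ht => ht.2.le)
  constructor
  · intro hb
    rcases cos_zero_pair hb ha hIcc.1 hIcc.2 with h | h
    · exact h
    · exfalso
      have hev := (eventually_lt_of_deriv_neg' (hd b) (hneg b hb)).2
      have hev3 : ∀ᶠ s in 𝓝[<] b, s ∈ Ioo a b :=
        Ioo_mem_nhdsLT_of_mem (⟨hab, le_refl b⟩ : b ∈ Ioc a b)
      obtain ⟨t₀, h1, h2⟩ := (hev.and hev3).exists
      have := (hband t₀ h2).2
      rw [h] at h1; linarith
  · intro hb
    have h1 : ψ b ≠ ψ a - π := fun h => hb (by rw [h, Real.cos_sub_pi, ha, neg_zero])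
    have h2 : ψ b ≠ ψ a := fun h => hb (by rw [h]; exact ha)
    exact ⟨lt_of_le_of_ne hIcc.1 (Ne.symm h1), lt_of_le_of_ne hIcc.2 h2⟩

private lemma bband' (hd : ∀ s, HasDerivAt ψ (ψ' s) s)
    (hneg : ∀ s, Real.cos (ψ s) = 0 → ψ' s < 0)
    {a b : ℝ} (hab : a < b) (hb : Real.cos (ψ b) = 0)
    (hnz : ∀ s ∈ Ico a b, Real.cos (ψ s) ≠ 0) :
    ψ a ∈ Ioo (ψ b) (ψ b + π) := by
  have hcont := psi_cont hd
  have hπ := Real.pi_pos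
  have hev1 : ∀ᶠ s in 𝓝[<] b, ψ b < ψ s := (eventually_lt_of_deriv_neg' (hd b) (hneg b hb)).2
  have hev2 : ∀ᶠ s in 𝓝[<] b, ψ s < ψ b + π := by
    have h2 : Tendsto ψ (𝓝[<] b) (𝓝 (ψ b)) :=
      (hcont.tendsto b).mono_left nhdsWithin_le_nhds
    exact h2.eventually_lt_const (by linarith)
  have hev3 : ∀ᶠ s in 𝓝[<] b, s ∈ Ioo a b :=
    Ioo_mem_nhdsLT_of_mem (⟨hab, le_refl b⟩ : b ∈ Ioc a b)
  obtain ⟨t₀, h1, h2, h3⟩ := (hev1.and (hev2.and hev3)).exists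
  have hsub : uIcc a t₀ ⊆ Ico a b := by
    rw [uIcc_of_le (le_of_lt h3.1)]
    exact fun u hu => ⟨hu.1, lt_of_le_of_lt hu.2 h3.2⟩
  constructor
  · by_contra hle
    push_neg at hle
    have hmem : ψ b ∈ uIcc (ψ a) (ψ t₀) := by
      rw [Set.mem_uIcc]; left; exact ⟨hle, le_of_lt h1⟩
    obtain ⟨u, hu, hψu⟩ := intermediate_value_uIcc (hcont.continuousOn) hmem
    exact hnz u (hsub hu) (by rw [hψu]; exact hb)
  · by_contra hge
    push_neg at hge
    have hmem : ψ b + π ∈ uIcc (ψ a) (ψ t₀) := by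
      rw [Set.mem_uIcc]; right; exact ⟨le_of_lt h2, hge⟩
    obtain ⟨u, hu, hψu⟩ := intermediate_value_uIcc (hcont.continuousOn) hmem
    refine hnz u (hsub hu) ?_
    rw [hψu]
    rw [Real.cos_add_pi, hb, neg_zero]


private lemma finZ' (hd : ∀ s, HasDerivAt ψ (ψ' s) s) (hc' : Continuous ψ')
    (hneg : ∀ s, Real.cos (ψ s) = 0 → ψ' s < 0) (a b : ℝ) :
    {s ∈ Icc a b | Real.cos (ψ s) = 0}.Finite := by
  have hcont : Continuous ψ := Differentiable.continuous (fun s => (hd s).differentiableAt)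
  have hπ := Real.pi_pos
  by_contra hinf
  rw [← Set.not_infinite, not_not] at hinf
  set S := {s ∈ Icc a b | Real.cos (ψ s) = 0} with hS
  let e := hinf.natEmbedding
  have hmem : ∀ n, (e n : ℝ) ∈ Icc a b := fun n => (e n).2.1
  obtain ⟨x, hx, φ, hφ, hlim⟩ := (isCompact_Icc).tendsto_subseq hmem
  have hxz : Real.cos (ψ x) = 0 := by
    have h1 : Tendsto (fun n => Real.cos (ψ ((e (φ n) : ℝ)))) atTop (𝓝 (Real.cos (ψ x))) :=
      ((Real.continuous_cos.comp hcont).tendsto x).comp hlim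
    have h2 : (fun n => Real.cos (ψ ((e (φ n) : ℝ)))) = fun _ => (0:ℝ) := by
      funext n; exact (e (φ n)).2.2
    rw [h2] at h1
    exact (tendsto_nhds_unique h1 tendsto_const_nhds)
  -- strict anti neighborhood
  have hx' : ψ' x < 0 := hneg x hxz
  have hopen : IsOpen {y | ψ' y < 0} := isOpen_lt hc' continuous_const
  obtain ⟨δ, hδpos, hδ⟩ := Metric.isOpen_iff.mp hopen x hx'
  have hanti : StrictAntiOn ψ (Ioo (x - δ) (x + δ)) := by
    apply strictAntiOn_of_deriv_neg (convex_Ioo _ _) hcont.continuousOn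
    intro y hy
    rw [interior_Ioo] at hy
    rw [(hd y).deriv]
    have : y ∈ Metric.ball x δ := by rw [Real.ball_eq_Ioo]; exact hy
    exact hδ this
  -- eventual closeness
  have hev1 : ∀ᶠ n in atTop, (e (φ n) : ℝ) ∈ Ioo (x - δ) (x + δ) := by
    have : Ioo (x - δ) (x + δ) ∈ 𝓝 x := by
      rw [← Real.ball_eq_Ioo]; exact Metric.ball_mem_nhds x hδpos
    exact hlim.eventually_mem this
  have hev2 : ∀ᶠ n in atTop, |ψ ((e (φ n) : ℝ)) - ψ x| < π / 2 := by
    have h1 : Tendsto (fun n => ψ ((e (φ n) : ℝ))) atTop (𝓝 (ψ x)) :=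
      ((hcont.tendsto x).comp hlim)
    have := Metric.tendsto_nhds.mp h1 (π/2) (by linarith)
    exact this.mono (fun n hn => by rwa [Real.dist_eq] at hn)
  obtain ⟨N, hN⟩ := (hev1.and hev2).exists_forall_of_atTop
  obtain ⟨hm1, hv1⟩ := hN N (le_refl N)
  obtain ⟨hm2, hv2⟩ := hN (N+1) (by omega)
  have hne : (e (φ N) : ℝ) ≠ (e (φ (N+1)) : ℝ) := by
    intro h
    have : e (φ N) = e (φ (N+1)) := Subtype.ext h
    have := e.injective this
    have := hφ.injective this
    omega
  have heq : ψ ((e (φ N) : ℝ)) = ψ ((e (φ (N+1)) : ℝ)) := by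
    apply cos_zero_dist (e (φ N)).2.2 (e (φ (N+1))).2.2
    have a1 := abs_sub_lt_iff.mp hv1
    have a2 := abs_sub_lt_iff.mp hv2
    rw [abs_sub_lt_iff]
    constructor <;> linarith [a1.1, a1.2, a2.1, a2.2]
  exact hne (hanti.injOn hm1 hm2 heq)


private lemma claimC' (hd : ∀ s, HasDerivAt ψ (ψ' s) s) (hc' : Continuous ψ')
    (hneg : ∀ s, Real.cos (ψ s) = 0 → ψ' s < 0) :
    ∀ n : ℕ, ∀ a b : ℝ, a ≤ b → Real.cos (ψ a) = 0 →
    {s ∈ Ioc a b | Real.cos (ψ s) = 0}.ncard = n →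
    (Real.cos (ψ b) = 0 → ψ b = ψ a - n * π) ∧
    (Real.cos (ψ b) ≠ 0 → ψ a - (n + 1) * π < ψ b ∧ ψ b < ψ a - n * π) := by
  intro n
  induction n with
  | zero =>
    intro a b hab ha hcard
    have hfin : {s ∈ Ioc a b | Real.cos (ψ s) = 0}.Finite :=
      (finZ' hd hc' hneg a b).subset (fun s hs => ⟨⟨hs.1.1.le, hs.1.2⟩, hs.2⟩)
    have hempty : {s ∈ Ioc a b | Real.cos (ψ s) = 0} = ∅ :=
      (Set.ncard_eq_zero hfin).mp hcard
    rcases eq_or_lt_of_le hab with rfl | hab'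
    · refine ⟨fun _ => by simp, fun hb => absurd ha hb⟩
    · have hb : Real.cos (ψ b) ≠ 0 := by
        intro h
        have : b ∈ {s ∈ Ioc a b | Real.cos (ψ s) = 0} := ⟨⟨hab', le_refl b⟩, h⟩
        rw [hempty] at this; exact this
      have hnz : ∀ s ∈ Ioo a b, Real.cos (ψ s) ≠ 0 := by
        intro s hs h
        have : s ∈ {s ∈ Ioc a b | Real.cos (ψ s) = 0} := ⟨⟨hs.1, hs.2.le⟩, h⟩
        rw [hempty] at this; exact this
      have hstep := (step' hd hneg hab' ha hnz).2 hb
      exact ⟨fun h => absurd h hb, fun _ => ⟨by push_cast; linarith [hstep.1], by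
        push_cast; linarith [hstep.2]⟩⟩
  | succ n ih =>
    intro a b hab ha hcard
    have hfin : {s ∈ Ioc a b | Real.cos (ψ s) = 0}.Finite :=
      (finZ' hd hc' hneg a b).subset (fun s hs => ⟨⟨hs.1.1.le, hs.1.2⟩, hs.2⟩)
    have hne : {s ∈ Ioc a b | Real.cos (ψ s) = 0}.Nonempty := by
      rw [Set.nonempty_iff_ne_empty]
      intro h
      rw [h, Set.ncard_empty] at hcard
      omega
    obtain ⟨a', ha'S, ha'min⟩ := Set.exists_min_image _ id hfin hne
    simp only [id] at ha'min
    obtain ⟨⟨haa', ha'b⟩, ha'z⟩ := ha'S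
    -- step from a to a'
    have hnz1 : ∀ s ∈ Ioo a a', Real.cos (ψ s) ≠ 0 := by
      intro s hs h
      have : a' ≤ s := ha'min s ⟨⟨hs.1, hs.2.le.trans ha'b⟩, h⟩
      linarith [hs.2]
    have hψa' : ψ a' = ψ a - π := (step' hd hneg haa' ha hnz1).1 ha'z
    -- the set over (a', b]
    have hsetEq : {s ∈ Ioc a' b | Real.cos (ψ s) = 0}
        = {s ∈ Ioc a b | Real.cos (ψ s) = 0} \ {a'} := by
      ext s
      simp only [Set.mem_diff, Set.mem_singleton_iff, Set.mem_setOf_eq, Set.mem_Ioc]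
      constructor
      · rintro ⟨⟨h1, h2⟩, h3⟩
        exact ⟨⟨⟨haa'.trans h1, h2⟩, h3⟩, fun h => by rw [h] at h1; exact lt_irrefl _ h1⟩
      · rintro ⟨⟨⟨h1, h2⟩, h3⟩, h4⟩
        have : a' ≤ s := ha'min s ⟨⟨h1, h2⟩, h3⟩
        exact ⟨⟨lt_of_le_of_ne this (Ne.symm h4), h2⟩, h3⟩
    have hcard' : {s ∈ Ioc a' b | Real.cos (ψ s) = 0}.ncard = n := by
      have hmem : a' ∈ {s | s ∈ Ioc a b ∧ Real.cos (ψ s) = 0} := ⟨⟨haa', ha'b⟩, ha'z⟩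
      rw [hsetEq, Set.ncard_diff_singleton_of_mem hmem, hcard]
      omega
    have := ih a' b ha'b ha'z hcard'
    rw [hψa'] at this
    push_cast
    exact ⟨fun hb => by linarith [this.1 hb],
      fun hb => ⟨by linarith [(this.2 hb).1], by linarith [(this.2 hb).2]⟩⟩


private lemma counting' (hd : ∀ s, HasDerivAt ψ (ψ' s) s) (hc' : Continuous ψ')
    (hneg : ∀ s, Real.cos (ψ s) = 0 → ψ' s < 0) {l : ℝ} (hl : 0 < l) {w : ℤ}
    (hw : ψ l - ψ 0 = 2 * π * w) :
    ({s ∈ Ico 0 l | Real.cos (ψ s) = 0}.ncard : ℤ) = -2 * w := by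
  have hπ := Real.pi_pos
  have hcont : Continuous ψ := Differentiable.continuous (fun s => (hd s).differentiableAt)
  have hfinIcc := finZ' hd hc' hneg 0 l
  have hfinIco : {s ∈ Ico 0 l | Real.cos (ψ s) = 0}.Finite :=
    hfinIcc.subset (fun s hs => ⟨⟨hs.1.1, hs.1.2.le⟩, hs.2⟩)
  have hfinIoc : {s ∈ Ioc 0 l | Real.cos (ψ s) = 0}.Finite :=
    hfinIcc.subset (fun s hs => ⟨⟨hs.1.1.le, hs.1.2⟩, hs.2⟩)
  have hfinIoo : {s ∈ Ioo 0 l | Real.cos (ψ s) = 0}.Finite :=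
    hfinIcc.subset (fun s hs => ⟨⟨hs.1.1.le, hs.1.2.le⟩, hs.2⟩)
  have hcosl : Real.cos (ψ l) = Real.cos (ψ 0) := by
    have : ψ l = ψ 0 + w * (2 * π) := by linarith [hw]
    rw [this, Real.cos_add_int_mul_two_pi]
  by_cases h0 : Real.cos (ψ 0) = 0
  · -- case A
    have hlz : Real.cos (ψ l) = 0 := by rw [hcosl]; exact h0
    set n := {s ∈ Ioc 0 l | Real.cos (ψ s) = 0}.ncard with hn
    have hC := (claimC' hd hc' hneg n 0 l hl.le h0 rfl).1 hlz
    -- ψ l = ψ 0 - n π and ψ l - ψ 0 = 2 π w  ⇒  (n:ℝ) = -2w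
    have hreal : (n : ℝ) = ((-2 * w : ℤ) : ℝ) := by
      push_cast
      have : 2 * π * w = -(n * π) := by linarith [hC, hw]
      have h2 : (2 * (w:ℝ) + n) * π = 0 := by linarith [this]
      have := mul_eq_zero.mp h2
      rcases this with h3 | h3
      · linarith
      · linarith
    have hnw : (n : ℤ) = -2 * w := by exact_mod_cast hreal
    -- Ico count equals Ioc count
    have hIcoEq : {s ∈ Ico 0 l | Real.cos (ψ s) = 0}
        = insert (0:ℝ) {s ∈ Ioo 0 l | Real.cos (ψ s) = 0} := by
      ext s
      simp only [Set.mem_insert_iff, Set.mem_setOf_eq, Set.mem_Ico, Set.mem_Ioo]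
      constructor
      · rintro ⟨⟨h1, h2⟩, h3⟩
        rcases eq_or_lt_of_le h1 with rfl | h1'
        · left; rfl
        · right; exact ⟨⟨h1', h2⟩, h3⟩
      · rintro (rfl | ⟨⟨h1, h2⟩, h3⟩)
        · exact ⟨⟨le_refl _, hl⟩, h0⟩
        · exact ⟨⟨h1.le, h2⟩, h3⟩
    have hIocEq : {s ∈ Ioc 0 l | Real.cos (ψ s) = 0}
        = insert l {s ∈ Ioo 0 l | Real.cos (ψ s) = 0} := by
      ext s
      simp only [Set.mem_insert_iff, Set.mem_setOf_eq, Set.mem_Ioc, Set.mem_Ioo]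
      constructor
      · rintro ⟨⟨h1, h2⟩, h3⟩
        rcases eq_or_lt_of_le h2 with rfl | h2'
        · left; rfl
        · right; exact ⟨⟨h1, h2'⟩, h3⟩
      · rintro (rfl | ⟨⟨h1, h2⟩, h3⟩)
        · exact ⟨⟨hl, le_refl _⟩, hlz⟩
        · exact ⟨⟨h1, h2.le⟩, h3⟩
    have hc1 : {s ∈ Ico 0 l | Real.cos (ψ s) = 0}.ncard
        = {s ∈ Ioo 0 l | Real.cos (ψ s) = 0}.ncard + 1 := by
      rw [hIcoEq, Set.ncard_insert_of_notMem (fun h => lt_irrefl (0:ℝ) h.1.1) hfinIoo]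
    have hc2 : n = {s ∈ Ioo 0 l | Real.cos (ψ s) = 0}.ncard + 1 := by
      rw [hn, hIocEq, Set.ncard_insert_of_notMem (fun h => lt_irrefl l h.1.2) hfinIoo]
    rw [show {s ∈ Ico 0 l | Real.cos (ψ s) = 0}.ncard = n from by rw [hc1, hc2]]
    exact hnw
  · -- case B
    have hlz : Real.cos (ψ l) ≠ 0 := by rw [hcosl]; exact h0
    set S₀ := {s ∈ Ico 0 l | Real.cos (ψ s) = 0} with hS₀
    rcases Set.eq_empty_or_nonempty S₀ with hemp | hne
    · -- no zeros: w = 0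
      have hw0 : w = 0 := by
        by_contra hw0
        have habs : π < |ψ l - ψ 0| := by
          rw [hw, abs_mul, abs_mul, abs_two, abs_of_pos hπ]
          have h1 : (1:ℝ) ≤ |(w:ℝ)| := by
            rw [← Int.cast_abs]
            exact_mod_cast Int.one_le_abs hw0
          nlinarith
        -- get a zero of cos strictly between ψ 0 and ψ l
        obtain ⟨z, hz, hzmem⟩ : ∃ z, Real.cos z = 0 ∧ z ∈ uIcc (ψ 0) (ψ l) := by
          rcases le_or_gt (ψ 0) (ψ l) with hle | hlt
          · have h' : π < ψ l - ψ 0 := by rwa [abs_of_nonneg (by linarith)] at habs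
            obtain ⟨z, h1, h2, h3⟩ := cos_zero_between h'
            exact ⟨z, h1, by rw [Set.uIcc_of_le hle]; exact ⟨h2.le, h3.le⟩⟩
          · have h' : π < -(ψ l - ψ 0) := by rwa [abs_of_nonpos (by linarith)] at habs
            have h'' : π < ψ 0 - ψ l := by linarith
            obtain ⟨z, h1, h2, h3⟩ := cos_zero_between h''
            exact ⟨z, h1, by rw [Set.uIcc_of_ge hlt.le]; exact ⟨h2.le, h3.le⟩⟩
        obtain ⟨u, hu, hψu⟩ := intermediate_value_uIcc (hcont.continuousOn) hzmem
        rw [Set.uIcc_of_le hl.le] at hu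
        have huz : Real.cos (ψ u) = 0 := by rw [hψu]; exact hz
        have hul : u ≠ l := fun h => hlz (h ▸ huz)
        have : u ∈ S₀ := ⟨⟨hu.1, lt_of_le_of_ne hu.2 hul⟩, huz⟩
        rw [hemp] at this; exact this
      rw [hemp, Set.ncard_empty, hw0]
      simp
    · -- nonempty: first zero a₁
      obtain ⟨a₁, ha₁S, ha₁min⟩ := Set.exists_min_image _ id hfinIco hne
      simp only [id] at ha₁min
      obtain ⟨⟨ha₁0, ha₁l⟩, ha₁z⟩ := ha₁S
      have ha₁pos : 0 < a₁ := lt_of_le_of_ne ha₁0 (fun h => h0 (h ▸ ha₁z))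
      have hpre : ψ 0 ∈ Ioo (ψ a₁) (ψ a₁ + π) := by
        apply bband' hd hneg ha₁pos ha₁z
        intro s hs h
        have : a₁ ≤ s := ha₁min s ⟨⟨hs.1, hs.2.trans ha₁l⟩, h⟩
        linarith [hs.2]
      set m := {s ∈ Ioc a₁ l | Real.cos (ψ s) = 0}.ncard with hm
      have hC := (claimC' hd hc' hneg m a₁ l ha₁l.le ha₁z rfl).2 hlz
      -- S₀ = insert a₁ (Ioc a₁ l set)
      have hsetEq : {s ∈ Ioc a₁ l | Real.cos (ψ s) = 0} = S₀ \ {a₁} := by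
        ext s
        simp only [hS₀, Set.mem_diff, Set.mem_singleton_iff, Set.mem_setOf_eq, Set.mem_Ioc,
          Set.mem_Ico]
        constructor
        · rintro ⟨⟨h1, h2⟩, h3⟩
          have hsl : s < l := lt_of_le_of_ne h2 (fun h => hlz (h ▸ h3))
          exact ⟨⟨⟨(ha₁0.trans h1.le), hsl⟩, h3⟩, fun h => by rw [h] at h1; exact lt_irrefl _ h1⟩
        · rintro ⟨⟨⟨h1, h2⟩, h3⟩, h4⟩
          have : a₁ ≤ s := ha₁min s ⟨⟨h1, h2⟩, h3⟩
          exact ⟨⟨lt_of_le_of_ne this (Ne.symm h4), h2.le⟩, h3⟩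
      have ha₁mem : a₁ ∈ S₀ := ⟨⟨ha₁0, ha₁l⟩, ha₁z⟩
      have hcardrel : m + 1 = S₀.ncard := by
        rw [hm, hsetEq]
        exact Set.ncard_diff_singleton_add_one ha₁mem hfinIco
      -- arithmetic
      have hb1 : (m : ℝ) * π < ψ 0 - ψ l := by
        have := hC.2; have := hpre.1; linarith
      have hb2 : ψ 0 - ψ l < ((m : ℝ) + 2) * π := by
        have := hC.1; have := hpre.2; push_cast; linarith
      have hww : ψ 0 - ψ l = -(2 * π * w) := by linarith
      have hi1 : (m : ℤ) < -2 * w := by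
        have : (m : ℝ) < ((-2 * w : ℤ) : ℝ) := by
          push_cast
          nlinarith [hb1, hww]
        exact_mod_cast this
      have hi2 : -2 * w < (m : ℤ) + 2 := by
        have : ((-2 * w : ℤ) : ℝ) < (m : ℝ) + 2 := by
          push_cast
          nlinarith [hb2, hww]
        exact_mod_cast this
      have : (S₀.ncard : ℤ) = (m : ℤ) + 1 := by exact_mod_cast hcardrel.symm
      omega

end Counting

private lemma exists_lift' {h : ℝ → ℂ} (hh : ContDiff ℝ (⊤ : ℕ∞) h) (hnz : ∀ s, h s ≠ 0) :
    ∃ ψ : ℝ → ℝ, (∀ s, HasDerivAt ψ ((deriv h s / h s).im) s) ∧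
      ∀ s, h s = ((‖h s‖ : ℝ) : ℂ) * Complex.exp ((ψ s : ℂ) * Complex.I) := by
  have hhd : Differentiable ℝ h := hh.differentiable (by simp)
  have hdc : Continuous (deriv h) := (contDiff_infty_iff_deriv.mp hh).2.continuous
  set c : ℝ → ℂ := fun t => deriv h t / h t with hc
  have hccont : Continuous c := hdc.div hh.continuous hnz
  set E : ℝ → ℂ := fun s => Complex.log (h 0) + ∫ t in (0:ℝ)..s, c t with hE
  have hEd : ∀ s, HasDerivAt E (c s) s := by
    intro s
    have h1 : HasDerivAt (fun u => ∫ t in (0:ℝ)..u, c t) (c s) s :=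
      intervalIntegral.integral_hasDerivAt_right (hccont.intervalIntegrable _ _)
        (hccont.stronglyMeasurableAtFilter _ _) hccont.continuousAt
    simpa [hE] using h1.const_add (Complex.log (h 0))
  have hg : ∀ s, h s * Complex.exp (-E s) = 1 := by
    have hgd : ∀ s, HasDerivAt (fun s => h s * Complex.exp (-E s)) 0 s := by
      intro s
      have h1 : HasDerivAt (fun s => Complex.exp (-E s)) (Complex.exp (-E s) * -c s) s :=
        ((hEd s).neg).cexp
      have h2 := ((hhd s).hasDerivAt).mul h1
      refine h2.congr_deriv ?_
      have h3 : h s * (Complex.exp (-E s) * -c s) = -(deriv h s * Complex.exp (-E s)) := by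
        simp only [hc]
        rw [mul_comm (Complex.exp (-E s)), ← mul_assoc, mul_neg, mul_div_assoc']
        rw [mul_comm (h s), mul_div_assoc, div_self (hnz s), mul_one]
        ring
      rw [h3]
      ring
    have hconst := is_const_of_deriv_eq_zero (𝕜 := ℝ)
      (fun s => ((hhd s).hasDerivAt.mul (((hEd s).neg).cexp)).differentiableAt)
      (fun s => (hgd s).deriv)
    intro s
    have h3 : h s * Complex.exp (-E s) = h 0 * Complex.exp (-E 0) := hconst s 0
    have h4 : E 0 = Complex.log (h 0) := by simp [hE]
    rw [h3, h4, Complex.exp_neg, Complex.exp_log (hnz 0), mul_inv_cancel₀ (hnz 0)]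
  have hexp : ∀ s, h s = Complex.exp (E s) := by
    intro s
    have h5 := hg s
    rw [Complex.exp_neg] at h5
    field_simp at h5
    exact h5
  refine ⟨fun s => (E s).im, ?_, ?_⟩
  · intro s
    exact (Complex.imCLM.hasFDerivAt.comp_hasDerivAt s (hEd s))
  · intro s
    have habs : ‖h s‖ = Real.exp ((E s).re) := by
      rw [hexp s, Complex.norm_exp]
    rw [habs, Complex.ofReal_exp, hexp s]
    rw [← Complex.exp_add]
    congr 1
    exact (Complex.re_add_im (E s)).symm


private lemma no_jump {d : ℝ → ℝ} (hcont : Continuous d)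
    (key : ∀ s, ∃ n : ℤ, d s = n * (2 * π)) {s t : ℝ} {n m : ℤ}
    (hn : d s = n * (2 * π)) (hm : d t = m * (2 * π)) (hlt : n < m) : False := by
  have hπ := Real.pi_pos
  have hnm : (n : ℝ) < m := by exact_mod_cast hlt
  have hnm' : (n : ℝ) + 1 ≤ m := by exact_mod_cast hlt
  have hmem : ((2 * n + 1 : ℤ) : ℝ) * π ∈ uIcc (d s) (d t) := by
    rw [Set.mem_uIcc]
    left
    rw [hn, hm]
    push_cast
    constructor <;> nlinarith
  obtain ⟨u, _, hu⟩ := intermediate_value_uIcc (hcont.continuousOn) hmem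
  obtain ⟨j, hj⟩ := key u
  rw [hj] at hu
  have h2 : (2 * (j:ℝ)) * π = (2 * (n:ℝ) + 1) * π := by push_cast at hu ⊢; nlinarith
  have h3 : 2 * (j:ℝ) = 2 * (n:ℝ) + 1 := mul_right_cancel₀ (ne_of_gt hπ) h2
  have : (2 * j : ℤ) = 2 * n + 1 := by exact_mod_cast h3
  omega

private lemma lift_diff_const' {φ ψ : ℝ → ℝ} (hφ : Continuous φ) (hψ : Continuous ψ)
    (h : ∀ s, Complex.exp ((φ s : ℂ) * Complex.I) = Complex.exp ((ψ s : ℂ) * Complex.I)) :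
    ∀ s t, φ s - ψ s = φ t - ψ t := by
  have hπ := Real.pi_pos
  have key : ∀ s, ∃ n : ℤ, φ s - ψ s = n * (2 * π) := by
    intro s
    have h1 : Complex.exp ((φ s : ℂ) * Complex.I - (ψ s : ℂ) * Complex.I) = 1 := by
      rw [Complex.exp_sub, h s, div_self (Complex.exp_ne_zero _)]
    rw [show (φ s : ℂ) * Complex.I - (ψ s : ℂ) * Complex.I
        = ((φ s - ψ s : ℝ) : ℂ) * Complex.I by push_cast; ring] at h1
    obtain ⟨n, hn⟩ := Complex.exp_eq_one_iff.mp h1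
    refine ⟨n, ?_⟩
    have hn' : Complex.I * (((φ s - ψ s : ℝ)) : ℂ) = Complex.I * ((n:ℂ) * (2 * π)) := by
      rw [mul_comm Complex.I, hn]; ring
    have h2 := mul_left_cancel₀ Complex.I_ne_zero hn'
    exact_mod_cast h2
  intro s t
  by_contra hne
  have hcont : Continuous (fun u => φ u - ψ u) := hφ.sub hψ
  obtain ⟨n, hn⟩ := key s
  obtain ⟨m, hm⟩ := key t
  have hnm : n ≠ m := fun hEq => hne (by rw [hn, hm, hEq])
  rcases lt_or_gt_of_ne hnm with hlt | hlt
  · exact no_jump hcont key hn hm hlt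
  · exact no_jump hcont key hm hn hlt

/-- `N_p`, the total number of normals of `α` through `p` (per period), is even and
the winding number of the evolute about `p` satisfies `w^β_p = r^α − N_p/2`. -/
theorem evolute_winding_eq_rotation_sub_half_normals
    (l : ℝ) (hl : 0 < l) (α : ℝ → ℂ)
    (hα : ContDiff ℝ (⊤ : ℕ∞) α)
    (hper : Function.Periodic α l)
    (hunit : ∀ s, ‖deriv α s‖ = 1)
    (k : ℝ → ℝ)
    (hk : ∀ s, deriv (deriv α) s = (k s : ℂ) * (Complex.I * deriv α s))
    (hkpos : ∀ s, 0 < k s)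
    (β : ℝ → ℂ)
    (hβ : ∀ s, β s = α s + ((1 / k s : ℝ) : ℂ) * (Complex.I * deriv α s))
    (p : ℂ)
    (hpα : p ∉ Set.range α) (hpβ : p ∉ Set.range β)
    (Np : ℕ)
    (hNp : Np = {s ∈ Set.Ico 0 l | dotR (α s - p) (deriv α s) = 0}.ncard)
    (rα : ℤ) (hrα : IsWinding l (deriv α) rα)
    (wβ : ℤ) (hwβ : IsWinding l (fun s => β s - p) wβ) :
    2 ∣ Np ∧ wβ = rα - (Np : ℤ) / 2 := by

  have hπ := Real.pi_pos
  set T : ℝ → ℂ := deriv α with hT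
  have hα' : ContDiff ℝ (⊤ : ℕ∞) α := hα.of_le (by simp)
  have hTC : ContDiff ℝ (⊤ : ℕ∞) T := (contDiff_infty_iff_deriv.mp hα').2
  have hT'C : ContDiff ℝ (⊤ : ℕ∞) (deriv T) := (contDiff_infty_iff_deriv.mp hTC).2
  have hT1 : ∀ s, ‖T s‖ = 1 := fun s => by
    exact hunit s
  have hTnz : ∀ s, T s ≠ 0 := fun s h => by
    have := hT1 s; rw [h] at this; simp at this
  have hknz : ∀ s, k s ≠ 0 := fun s => ne_of_gt (hkpos s)
  have hαd : ∀ s, HasDerivAt α (T s) s := fun s =>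
    ((hα'.differentiable (by simp)) s).hasDerivAt
  have hTd : ∀ s, HasDerivAt T (deriv T s) s := fun s =>
    ((hTC.differentiable (by simp)) s).hasDerivAt
  have hTT : ∀ s, T s * (starRingEnd ℂ) (T s) = 1 := fun s => by
    rw [Complex.mul_conj, Complex.normSq_eq_norm_sq, hT1 s]; norm_num
  have hnormT : ∀ s, (T s).re * (T s).re + (T s).im * (T s).im = 1 := fun s => by
    have h1 : Complex.normSq (T s) = 1 := by rw [Complex.normSq_eq_norm_sq, hT1 s]; norm_num
    rw [Complex.normSq_apply] at h1; exact h1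
  -- smoothness of k
  have hkformula : k = fun s => (deriv T s * (starRingEnd ℂ) (Complex.I * T s)).re := by
    funext s
    rw [hk s]
    rw [mul_assoc, Complex.mul_conj, Complex.normSq_mul, Complex.normSq_I,
      Complex.normSq_eq_norm_sq, hT1 s]
    norm_num
  have hkC : ContDiff ℝ (⊤ : ℕ∞) k := by
    rw [hkformula]
    exact Complex.reCLM.contDiff.comp
      (hT'C.mul (Complex.conjCLE.contDiff.comp (contDiff_const.mul hTC)))
  have hqC : ContDiff ℝ (⊤ : ℕ∞) (fun s => ((1 / k s : ℝ) : ℂ)) :=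
    Complex.ofRealCLM.contDiff.comp (contDiff_const.div hkC hknz)
  -- the comparison curve h
  set W : ℝ → ℂ := fun s => (α s - p) * (starRingEnd ℂ) (T s) with hW
  set h : ℝ → ℂ := fun s => W s + Complex.I * ((1 / k s : ℝ) : ℂ) with hh
  have heq : ∀ s, h s = (β s - p) * (starRingEnd ℂ) (T s) := by
    intro s
    have h2 : (α s + ((1 / k s : ℝ) : ℂ) * (Complex.I * T s) - p) * (starRingEnd ℂ) (T s)
        = (α s - p) * (starRingEnd ℂ) (T s)
          + ((1 / k s : ℝ) : ℂ) * Complex.I * (T s * (starRingEnd ℂ) (T s)) := by ring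
    rw [hβ s, h2, hTT s, mul_one, hh, hW]
    ring
  have hβnz : ∀ s, β s - p ≠ 0 := fun s h => hpβ ⟨s, by rw [← sub_eq_zero]; exact h⟩
  have hconjTnz : ∀ s, (starRingEnd ℂ) (T s) ≠ 0 := fun s h => by
    have := Complex.norm_conj (T s); rw [h, hT1 s] at this; simp at this
  have hhnz : ∀ s, h s ≠ 0 := fun s => by
    rw [heq s]; exact mul_ne_zero (hβnz s) (hconjTnz s)
  have hWC : ContDiff ℝ (⊤ : ℕ∞) W :=
    (hα'.sub contDiff_const).mul (Complex.conjCLE.contDiff.comp hTC)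
  have hhC : ContDiff ℝ (⊤ : ℕ∞) h := hWC.add (contDiff_const.mul hqC)
  -- the lift
  obtain ⟨ψ, hψd, hψlift⟩ := exists_lift' hhC hhnz
  set G : ℝ → ℝ := fun s => (deriv h s / h s).im with hG
  have hψcont : Continuous ψ := Differentiable.continuous (fun s => (hψd s).differentiableAt)
  have hGcont : Continuous G := Complex.continuous_im.comp
    (((contDiff_infty_iff_deriv.mp hhC).2.continuous).div hhC.continuous hhnz)
  -- real and imaginary parts of h
  have hReh : ∀ s, (h s).re = dotR (α s - p) (T s) := by
    intro s
    rw [hh]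
    simp [hW, dotR, Complex.add_re, Complex.mul_re, Complex.conj_re, Complex.conj_im]
  -- derivative of h
  have hqRC : ContDiff ℝ (⊤ : ℕ∞) (fun u => 1 / k u) := contDiff_const.div hkC hknz
  have hqd : ∀ s, HasDerivAt (fun u => ((1 / k u : ℝ) : ℂ))
      ((deriv (fun u => 1 / k u) s : ℝ) : ℂ) s := fun s =>
    Complex.ofRealCLM.hasFDerivAt.comp_hasDerivAt s
      ((hqRC.differentiable (by simp)) s).hasDerivAt
  have hconjTd : ∀ s, HasDerivAt (fun u => (starRingEnd ℂ) (T u))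
      ((starRingEnd ℂ) (deriv T s)) s := fun s => by
    have h1 := Complex.conjCLE.toContinuousLinearMap.hasFDerivAt.comp_hasDerivAt s (hTd s)
    exact h1
  have hWd : ∀ s, HasDerivAt W
      (T s * (starRingEnd ℂ) (T s) + (α s - p) * (starRingEnd ℂ) (deriv T s)) s := fun s => by
    have h1 := ((hαd s).sub_const p).mul (hconjTd s)
    rw [hW]
    convert h1 using 1
    all_goals rfl
  have hhd : ∀ s, HasDerivAt h
      (T s * (starRingEnd ℂ) (T s) + (α s - p) * (starRingEnd ℂ) (deriv T s)
        + Complex.I * ((deriv (fun u => 1 / k u) s : ℝ) : ℂ)) s := fun s =>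
    (hWd s).add ((hqd s).const_mul Complex.I)
  -- key: Re (deriv h) = k * Im h
  have hkey : ∀ s, (deriv h s).re = k s * (h s).im := by
    intro s
    rw [(hhd s).deriv, hTT s, hk s, hh]
    simp [hW, Complex.add_re, Complex.add_im, Complex.mul_re, Complex.mul_im,
      Complex.conj_re, Complex.conj_im]
    have h4 : k s * (k s)⁻¹ = 1 := mul_inv_cancel₀ (hknz s)
    nlinarith [hnormT s, h4]
  -- cosine characterization
  have habsnz : ∀ s, ‖h s‖ ≠ 0 := fun s => by
    simpa using hhnz s
  have hcos : ∀ s, (Real.cos (ψ s) = 0 ↔ (h s).re = 0) := by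
    intro s
    have h1 : (h s).re = ‖h s‖ * Real.cos (ψ s) := by
      rw [hψlift s]
      simp [Complex.mul_re, Complex.exp_ofReal_mul_I_re]
    rw [h1]
    constructor
    · intro h2; rw [h2, mul_zero]
    · intro h2
      rcases mul_eq_zero.mp h2 with h3 | h3
      · exact absurd h3 (habsnz s)
      · exact h3
  -- negativity of the angular speed at crossings
  have hneg : ∀ s, Real.cos (ψ s) = 0 → G s < 0 := by
    intro s hz
    have hre : (h s).re = 0 := (hcos s).mp hz
    have him : (h s).im ≠ 0 := fun h2 => hhnz s (Complex.ext hre h2)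
    have hGs : G s = - k s := by
      rw [hG]
      simp only
      rw [Complex.div_im, hre, hkey s, Complex.normSq_apply, hre]
      field_simp
      ring
    rw [hGs]
    simpa using hkpos s
  -- link to the given windings
  obtain ⟨θT, hθTc, hθTlift, hθTper⟩ := hrα
  obtain ⟨θβ, hθβc, hθβlift, hθβper⟩ := hwβ
  have hexpeq : ∀ s, Complex.exp ((ψ s : ℂ) * Complex.I)
      = Complex.exp (((θβ s - θT s : ℝ) : ℂ) * Complex.I) := by
    intro s
    have habsh : ‖h s‖ = ‖β s - p‖ := by
      rw [heq s, norm_mul, Complex.norm_conj, hT1 s, mul_one]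
    have hconjT : (starRingEnd ℂ) (T s) = Complex.exp (-((θT s : ℂ) * Complex.I)) := by
      have h1 := hθTlift s
      rw [hT1 s] at h1
      rw [h1, Complex.ofReal_one, one_mul, ← Complex.exp_conj]
      congr 1
      simp [map_mul, Complex.conj_ofReal, Complex.conj_I]
    have hb : β s - p = ((‖β s - p‖ : ℝ) : ℂ)
        * Complex.exp ((θβ s : ℂ) * Complex.I) := by simpa using hθβlift s
    have h2 : h s = ((‖β s - p‖ : ℝ) : ℂ)
        * Complex.exp (((θβ s - θT s : ℝ) : ℂ) * Complex.I) := by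
      have h6 : (θβ s : ℂ) * Complex.I + -((θT s : ℂ) * Complex.I)
          = ((θβ s - θT s : ℝ) : ℂ) * Complex.I := by push_cast; ring
      conv_lhs => rw [heq s, hb, hconjT]
      rw [mul_assoc, ← Complex.exp_add, h6]
    have h3 := hψlift s
    rw [habsh] at h3
    have h4 : ((‖β s - p‖ : ℝ) : ℂ) ≠ 0 := by
      have h5 := habsnz s
      rw [habsh] at h5
      exact Complex.ofReal_ne_zero.mpr h5
    have h5 := h3.symm.trans h2
    exact mul_left_cancel₀ h4 h5
  have hconstdiff := lift_diff_const' hψcont (hθβc.sub hθTc) hexpeq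
  have hwind : ψ l - ψ 0 = 2 * π * ((wβ - rα : ℤ) : ℝ) := by
    have h1 := hconstdiff l 0
    simp only [Pi.sub_apply] at h1
    push_cast
    have h2 : θβ l - θβ 0 = 2 * π * wβ := hθβper
    have h3 : θT l - θT 0 = 2 * π * rα := hθTper
    nlinarith [h1, h2, h3]
  have hcount := counting' hψd hGcont hneg hl hwind
  have hsets : {s ∈ Set.Ico 0 l | dotR (α s - p) (deriv α s) = 0}
      = {s ∈ Set.Ico 0 l | Real.cos (ψ s) = 0} := by
    ext s
    simp only [Set.mem_setOf_eq]
    constructor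
    · rintro ⟨h1, h2⟩
      exact ⟨h1, (hcos s).mpr (by rw [hReh s]; exact h2)⟩
    · rintro ⟨h1, h2⟩
      refine ⟨h1, ?_⟩
      rw [← hReh s]
      exact (hcos s).mp h2
  have hfinal : (Np : ℤ) = -2 * (wβ - rα) := by
    rw [hNp, hsets]
    exact hcount
  constructor
  · have : (2 : ℤ) ∣ (Np : ℤ) := ⟨rα - wβ, by linarith [hfinal]⟩
    exact_mod_cast this
  · omega
end

section
/- Assume k(s) > 0 for all s and let p ∈ ℝ² lie neither on the image of α nor on the image of the evolute β. Let m_p be the number of s ∈ [0,l) such that (α(s) − p)·α'(s) = 0 and ρ_s < 0, where ρ_s = (p − α(s))·n(s) (i.e. the number of normal segments with ρ < 0 through p). Then the winding number of α about p satisfies w^α_p = r^α − m_p. -/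
open Set Real Complex Filter


private lemma cross_fwd (ψ : ℝ → ℝ) (hψ : Continuous ψ) (L : Set ℝ) (a b : ℝ)
    (hcross : ∀ s ∈ Set.Icc a b, ψ s ∈ L → ∃ δ > 0, ∀ t, |t - s| < δ →
      (t < s → ψ t < ψ s) ∧ (s < t → ψ s < ψ t))
    {s : ℝ} (hs : s ∈ Set.Icc a b) (hsL : ψ s ∈ L)
    {t : ℝ} (hst : s < t) (htb : t ≤ b) : ψ s < ψ t := by
  by_contra hcon
  push_neg at hcon
  obtain ⟨δ, hδ, hloc⟩ := hcross s hs hsL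
  have key : ∀ u, s < u → u ≤ b → ψ u ≤ ψ s → s + δ ≤ u := by
    intro u hu hub hψu
    by_contra h
    push_neg at h
    have := (hloc u (by rw [abs_sub_lt_iff]; constructor <;> linarith)).2 hu
    linarith
  set C := Set.Icc a b ∩ ψ ⁻¹' Set.Iic (ψ s) ∩ Set.Ici (s + δ) with hCdef
  have hCne : C.Nonempty :=
    ⟨t, ⟨⟨hs.1.trans hst.le, htb⟩, hcon⟩, key t hst htb hcon⟩
  have hCc : IsClosed C :=
    ((isClosed_Icc.inter (isClosed_Iic.preimage hψ)).inter isClosed_Ici)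
  have hbdd : BddBelow C := ⟨a, fun u hu => hu.1.1.1⟩
  set t₀ := sInf C with ht₀def
  have ht₀C : t₀ ∈ C := hCc.csInf_mem hCne hbdd
  have hmin : ∀ u ∈ C, t₀ ≤ u := fun u hu => csInf_le hbdd hu
  obtain ⟨⟨ht₀ab, ht₀ψ⟩, ht₀δ⟩ := ht₀C
  have hst₀ : s < t₀ := by have := ht₀δ; simp only [mem_Ici] at this; linarith
  have hψt₀ : ψ t₀ = ψ s := by
    by_contra hne
    have hlt : ψ t₀ < ψ s := lt_of_le_of_ne ht₀ψ hne
    have hmid : s + δ/2 ≤ t₀ := by have := ht₀δ; simp only [mem_Ici] at this; linarith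
    have hup : ψ s < ψ (s + δ/2) :=
      (hloc (s + δ/2) (by rw [abs_sub_lt_iff]; constructor <;> linarith)).2 (by linarith)
    have hsub : ψ s ∈ Set.Icc (ψ t₀) (ψ (s + δ/2)) := ⟨hlt.le, hup.le⟩
    obtain ⟨u, huI, huψ⟩ := intermediate_value_Icc' hmid hψ.continuousOn hsub
    have hu1 : s < u := by have := huI.1; linarith
    have hu2 : u ≤ b := huI.2.trans ht₀ab.2
    have huC : u ∈ C := ⟨⟨⟨hs.1.trans hu1.le, hu2⟩, huψ.le⟩, key u hu1 hu2 huψ.le⟩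
    have : u < t₀ := lt_of_le_of_ne huI.2 (fun h => hne (h ▸ huψ ▸ rfl))
    exact absurd (hmin u huC) (not_le.mpr this)
  obtain ⟨δ₂, hδ₂, hloc₂⟩ := hcross t₀ ⟨hs.1.trans hst₀.le, ht₀ab.2⟩ (hψt₀ ▸ hsL)
  set t₁ := max ((s + t₀)/2) (t₀ - δ₂/2) with ht₁def
  have ht₁lt : t₁ < t₀ := max_lt (by linarith) (by linarith)
  have ht₁gt : s < t₁ := lt_of_lt_of_le (by linarith) (le_max_left _ _)
  have ht₁near : |t₁ - t₀| < δ₂ := by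
    rw [abs_sub_lt_iff]
    constructor
    · linarith
    · have := le_max_right ((s + t₀)/2) (t₀ - δ₂/2); linarith
  have hψt₁ : ψ t₁ < ψ s := hψt₀ ▸ (hloc₂ t₁ ht₁near).1 ht₁lt
  have ht₁b : t₁ ≤ b := ht₁lt.le.trans ht₀ab.2
  have ht₁C : t₁ ∈ C := ⟨⟨⟨hs.1.trans ht₁gt.le, ht₁b⟩, hψt₁.le⟩, key t₁ ht₁gt ht₁b hψt₁.le⟩
  exact absurd (hmin t₁ ht₁C) (not_le.mpr ht₁lt)

private lemma cross_bwd (ψ : ℝ → ℝ) (hψ : Continuous ψ) (L : Set ℝ) (a b : ℝ)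
    (hcross : ∀ s ∈ Set.Icc a b, ψ s ∈ L → ∃ δ > 0, ∀ t, |t - s| < δ →
      (t < s → ψ t < ψ s) ∧ (s < t → ψ s < ψ t))
    {s : ℝ} (hs : s ∈ Set.Icc a b) (hsL : ψ s ∈ L)
    {t : ℝ} (hts : t < s) (hat : a ≤ t) : ψ t < ψ s := by
  have h := cross_fwd (fun u => -ψ (-u)) (by continuity) {x | -x ∈ L} (-b) (-a)
    (fun s' hs' hs'L => by
      obtain ⟨δ, hδ, hloc⟩ := hcross (-s') ⟨by linarith [hs'.2], by linarith [hs'.1]⟩ (by simpa using hs'L)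
      exact ⟨δ, hδ, fun t' ht' => ⟨
        fun hlt => by
          have := (hloc (-t') (by rw [abs_sub_lt_iff] at ht' ⊢; constructor <;> linarith [ht'.1, ht'.2])).2 (by linarith)
          simpa using this,
        fun hlt => by
          have := (hloc (-t') (by rw [abs_sub_lt_iff] at ht' ⊢; constructor <;> linarith [ht'.1, ht'.2])).1 (by linarith)
          simpa using this⟩⟩)
    (s := -s) ⟨by linarith [hs.2], by linarith [hs.1]⟩ (by simpa using hsL)
    (t := -t) (by linarith) (by linarith)
  simpa using h

private lemma counting (ψ : ℝ → ℝ) (hψ : Continuous ψ) (l : ℝ) (hl : 0 < l)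
    (c : ℝ) (m : ℤ) (hm : ψ l = ψ 0 + 2 * π * m)
    (hcross : ∀ s ∈ Set.Icc 0 l, ψ s ∈ {x : ℝ | ∃ n : ℤ, x = c + 2 * π * n} →
      ∃ δ > 0, ∀ t, |t - s| < δ → (t < s → ψ t < ψ s) ∧ (s < t → ψ s < ψ t)) :
    ({s ∈ Set.Ico 0 l | ∃ n : ℤ, ψ s = c + 2 * π * n}.ncard : ℤ) = m := by
  have pi_pos := Real.pi_pos
  have h2π : (0:ℝ) < 2*π := by linarith
  set L : Set ℝ := {x : ℝ | ∃ n : ℤ, x = c + 2 * π * n} with hL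
  set S : Set ℝ := {s ∈ Set.Ico 0 l | ∃ n : ℤ, ψ s = c + 2 * π * n} with hS
  have hSL : ∀ s, s ∈ S ↔ s ∈ Set.Ico 0 l ∧ ψ s ∈ L := fun s => Iff.rfl
  rcases S.eq_empty_or_nonempty with hE | ⟨s₀, hs₀⟩
  · -- no crossings : m = 0
    have hnotL : ∀ s ∈ Set.Icc 0 l, ψ s ∉ L := by
      intro s hsm hsl
      rcases lt_or_eq_of_le hsm.2 with h | h
      · exact absurd ((hSL s).mpr ⟨⟨hsm.1, h⟩, hsl⟩) (by simp [hE])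
      · obtain ⟨n, hn⟩ := hsl
        have h0 : ψ 0 ∈ L := ⟨n - m, by rw [h] at hn; push_cast; linarith [hm]⟩
        exact absurd ((hSL 0).mpr ⟨⟨le_refl 0, hl⟩, h0⟩) (by simp [hE])
    set n₀ : ℤ := ⌊(ψ 0 - c)/(2*π)⌋ with hn₀
    have h1 : c + 2*π*n₀ ≤ ψ 0 := by
      have := Int.floor_le ((ψ 0 - c)/(2*π))
      rw [le_div_iff₀ h2π] at this; linarith
    have h1' : c + 2*π*n₀ < ψ 0 :=
      lt_of_le_of_ne h1 (fun h => hnotL 0 ⟨le_refl 0, hl.le⟩ ⟨n₀, h.symm⟩)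
    have h2 : ψ 0 < c + 2*π*(n₀+1) := by
      have := Int.lt_floor_add_one ((ψ 0 - c)/(2*π))
      rw [div_lt_iff₀ h2π] at this; push_cast; push_cast at this; linarith
    have h3 : c + 2*π*n₀ < ψ l := by
      by_contra hcon
      push_neg at hcon
      obtain ⟨u, huI, huψ⟩ := intermediate_value_Icc' hl.le hψ.continuousOn ⟨hcon, h1⟩
      exact hnotL u huI ⟨n₀, huψ⟩
    have h4 : ψ l < c + 2*π*(n₀+1) := by
      by_contra hcon
      push_neg at hcon
      obtain ⟨u, huI, huψ⟩ := intermediate_value_Icc hl.le hψ.continuousOn ⟨h2.le, hcon⟩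
      exact hnotL u huI ⟨n₀+1, by push_cast; linarith [huψ]⟩
    have hm0 : m = 0 := by
      have hr1 : (m:ℝ) < 1 := by
        push_cast at h4; nlinarith
      have hr2 : (-1:ℝ) < (m:ℝ) := by
        nlinarith
      have hi1 : m < 1 := by exact_mod_cast hr1
      have hi2 : (-1:ℤ) < m := by exact_mod_cast hr2
      omega
    rw [hE]; simp [hm0]
  · -- at least one crossing
    have hfwd : ∀ {s : ℝ}, s ∈ Set.Icc 0 l → ψ s ∈ L → ∀ {t : ℝ}, s < t → t ≤ l → ψ s < ψ t :=
      fun {s} hs hsL {t} hst htb => cross_fwd ψ hψ L 0 l hcross hs hsL hst htb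
    have hbwd : ∀ {s : ℝ}, s ∈ Set.Icc 0 l → ψ s ∈ L → ∀ {t : ℝ}, t < s → 0 ≤ t → ψ t < ψ s :=
      fun {s} hs hsL {t} hts hat => cross_bwd ψ hψ L 0 l hcross hs hsL hts hat
    have hmemIcc : ∀ {s : ℝ}, s ∈ S → s ∈ Set.Icc 0 l := fun {s} hs => ⟨hs.1.1, hs.1.2.le⟩
    have hlow : ∀ {s : ℝ}, s ∈ S → ψ 0 ≤ ψ s := by
      intro s hs
      rcases eq_or_lt_of_le hs.1.1 with h | h
      · rw [← h]
      · exact (hbwd (hmemIcc hs) hs.2 h (le_refl 0)).le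
    have hhigh : ∀ {s : ℝ}, s ∈ S → ψ s < ψ l :=
      fun {s} hs => hfwd (hmemIcc hs) hs.2 hs.1.2 (le_refl l)
    have h0l : ψ 0 < ψ l := lt_of_le_of_lt (hlow hs₀) (hhigh hs₀)
    have hmpos : 0 < m := by
      have : (0:ℝ) < (m:ℝ) := by nlinarith
      exact_mod_cast this
    have hinj : Set.InjOn ψ S := by
      intro x hx y hy hxy
      by_contra hne
      rcases lt_or_gt_of_ne hne with h | h
      · exact absurd hxy (ne_of_lt (hfwd (hmemIcc hx) hx.2 h hy.1.2.le))
      · exact absurd hxy.symm (ne_of_lt (hfwd (hmemIcc hy) hy.2 h hx.1.2.le))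
    set N : ℤ := ⌈(ψ 0 - c)/(2*π)⌉ with hN
    have hiff : ∀ n : ℤ, ψ 0 ≤ c + 2*π*n ↔ N ≤ n := by
      intro n
      rw [hN, Int.ceil_le, div_le_iff₀ h2π]
      constructor <;> intro h <;> linarith
    have hiff2 : ∀ n : ℤ, c + 2*π*n < ψ l ↔ n < N + m := by
      intro n
      rw [hm]
      have hnm := hiff (n - m)
      push_cast at hnm
      constructor
      · intro h
        by_contra hc
        push_neg at hc
        have := hnm.mpr (by omega)
        linarith
      · intro h
        have h' : ¬ ((ψ 0) ≤ c + 2*π*((n:ℝ) - (m:ℝ))) := fun hcon => by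
          have := hnm.mp hcon; omega
        push_neg at h'
        linarith
    have himg : ψ '' S = (fun n : ℤ => c + 2*π*n) '' ↑(Finset.Ico N (N+m)) := by
      ext y
      constructor
      · rintro ⟨s, hs, rfl⟩
        obtain ⟨n, hn⟩ := hs.2
        refine ⟨n, ?_, hn.symm⟩
        simp only [Finset.coe_Ico, Set.mem_Ico]
        exact ⟨(hiff n).mp (hn ▸ hlow hs), (hiff2 n).mp (hn ▸ hhigh hs)⟩
      · rintro ⟨n, hn, rfl⟩
        simp only [Finset.coe_Ico, Set.mem_Ico] at hn
        have hy0 : ψ 0 ≤ c + 2*π*n := (hiff n).mpr hn.1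
        have hyl : c + 2*π*n < ψ l := (hiff2 n).mpr hn.2
        rcases eq_or_lt_of_le hy0 with h | h
        · exact ⟨0, ⟨⟨le_refl 0, hl⟩, ⟨n, h⟩⟩, h⟩
        · obtain ⟨s, hsI, hsψ⟩ := intermediate_value_Icc hl.le hψ.continuousOn ⟨h.le, hyl.le⟩
          have hsl : s < l := by
            rcases lt_or_eq_of_le hsI.2 with h' | h'
            · exact h'
            · rw [h'] at hsψ; exact absurd hsψ.symm (ne_of_lt hyl)
          exact ⟨s, ⟨⟨hsI.1, hsl⟩, ⟨n, hsψ⟩⟩, hsψ⟩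
    have hginj : Function.Injective (fun n : ℤ => c + 2*π*n) := by
      intro n₁ n₂ h
      simp only at h
      have : (n₁:ℝ) = n₂ := mul_left_cancel₀ (ne_of_gt h2π) (by linarith)
      exact_mod_cast this
    have hcount : S.ncard = (Finset.Ico N (N+m)).card := by
      rw [← Set.ncard_image_of_injOn hinj, himg,
        Set.ncard_image_of_injective _ hginj, Set.ncard_coe_finset]
    rw [hcount, Int.card_Ico]
    omega

/-- Theorem 4 of the paper: `w^α_p = r^α − m_p`, where `m_p` is the number of normal
segments of `α` through `p` with `ρ < 0`, `r^α` the rotation index of `α`, and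
`w^α_p` the winding number of `α` about `p`. -/
theorem curve_winding_eq_rotation_sub_negative_normal_segments
    (l : ℝ) (hl : 0 < l) (α : ℝ → ℂ)
    (hα : ContDiff ℝ (⊤ : ℕ∞) α)
    (hper : Function.Periodic α l)
    (hunit : ∀ s, ‖deriv α s‖ = 1)
    (k : ℝ → ℝ)
    (hk : ∀ s, deriv (deriv α) s = (k s : ℂ) * (Complex.I * deriv α s))
    (hkpos : ∀ s, 0 < k s)
    (β : ℝ → ℂ)
    (hβ : ∀ s, β s = α s + ((1 / k s : ℝ) : ℂ) * (Complex.I * deriv α s))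
    (p : ℂ)
    (hpα : p ∉ Set.range α) (hpβ : p ∉ Set.range β)
    (ρ : ℝ → ℝ) (hρ : ∀ s, ρ s = dotR (p - α s) (Complex.I * deriv α s))
    (mp : ℕ)
    (hmp : mp = {s ∈ Set.Ico 0 l |
        dotR (α s - p) (deriv α s) = 0 ∧ ρ s < 0}.ncard)
    (rα : ℤ) (hrα : IsWinding l (deriv α) rα)
    (wα : ℤ) (hwα : IsWinding l (fun s => α s - p) wα) :
    wα = rα - mp := by
  obtain ⟨θ, hθc, hθe, hθl⟩ := hrα
  obtain ⟨φ, hφc, hφe, hφl⟩ := hwα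
  set ψ : ℝ → ℝ := fun s => θ s - φ s with hψdef
  have hψc : Continuous ψ := hθc.sub hφc
  set h : ℝ → ℂ := fun s => (starRingEnd ℂ) (α s - p) * deriv α s with hhdef
  -- basic nonvanishing facts
  have hαp : ∀ s, α s - p ≠ 0 := by
    intro s hs
    exact hpα ⟨s, by rw [sub_eq_zero] at hs; exact hs⟩
  have habs : ∀ s, 0 < ‖α s - p‖ := fun s => norm_pos_iff.mpr (hαp s)
  -- tangent is exp(θ I)
  have hT : ∀ s, deriv α s = Complex.exp ((θ s : ℂ) * Complex.I) := by
    intro s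
    have h1 := hθe s
    rw [show ‖deriv α s‖ = 1 by rw [hunit]] at h1
    simpa using h1
  -- key identity
  have hE : ∀ s, h s = ((‖α s - p‖ : ℝ) : ℂ) * Complex.exp ((ψ s : ℂ) * Complex.I) := by
    intro s
    set r : ℝ := ‖α s - p‖ with hrdef
    have hφe' : α s - p = (r : ℂ) * Complex.exp ((φ s : ℂ) * Complex.I) := by
      simpa using hφe s
    have h0 : h s = (starRingEnd ℂ) (α s - p) * deriv α s := rfl
    rw [h0, hT s, hφe']
    rw [map_mul, ← Complex.exp_conj, map_mul, Complex.conj_ofReal, Complex.conj_I,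
      Complex.conj_ofReal, mul_assoc, ← Complex.exp_add]
    congr 1
    simp only [hψdef]
    push_cast
    ring
  have hhne : ∀ s, h s ≠ 0 := by
    intro s
    rw [hE s]
    exact mul_ne_zero (by exact_mod_cast (habs s).ne') (Complex.exp_ne_zero _)
  -- real and imaginary parts of h
  have hre : ∀ s, (h s).re = dotR (α s - p) (deriv α s) := by
    intro s
    simp [hhdef, dotR, Complex.mul_re]
    ring
  have him : ∀ s, (h s).im = ρ s := by
    intro s
    rw [hρ s]
    simp [hhdef, dotR, Complex.mul_im, Complex.mul_re]
    ring
  have hre' : ∀ s, (h s).re = ‖α s - p‖ * Real.cos (ψ s) := by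
    intro s
    rw [hE s]
    simp [Complex.mul_re, Complex.exp_ofReal_mul_I_re, Complex.exp_ofReal_mul_I_im]
  have him' : ∀ s, (h s).im = ‖α s - p‖ * Real.sin (ψ s) := by
    intro s
    rw [hE s]
    simp [Complex.mul_im, Complex.exp_ofReal_mul_I_re, Complex.exp_ofReal_mul_I_im]
  -- derivative of h
  have hα1 : Differentiable ℝ α := hα.differentiable (by simp)
  have hα2 : Differentiable ℝ (deriv α) := by
    have h2 : ContDiff ℝ ((⊤:ℕ∞) : WithTop ℕ∞) α := hα.of_le (by simp)
    exact ((contDiff_infty_iff_deriv.mp h2).2).differentiable (by simp)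
  have hhc : Continuous h := by
    apply Continuous.mul
    · exact Complex.continuous_conj.comp ((hα1.continuous).sub continuous_const)
    · exact hα2.continuous
  have hh' : ∀ s, HasDerivAt h (1 + (k s : ℂ) * (Complex.I * h s)) s := by
    intro s
    have h1 : HasDerivAt (fun t => (starRingEnd ℂ) (α t - p)) (starRingEnd ℂ (deriv α s)) s :=
      HasDerivAt.star ((hα1 s).hasDerivAt.sub_const p)
    have h2 : HasDerivAt (deriv α) (deriv (deriv α) s) s := (hα2 s).hasDerivAt
    have h3 := h1.mul h2
    refine h3.congr_deriv ?_
    rw [hk s]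
    have h4 : (starRingEnd ℂ) (deriv α s) * deriv α s = 1 := by
      rw [mul_comm, Complex.mul_conj]
      norm_cast
      rw [show Complex.normSq (deriv α s) = ‖deriv α s‖^2 by
        rw [Complex.normSq_eq_norm_sq], hunit s]
      norm_num
    rw [h4]
    simp only [hhdef]
    ring
  -- ψ - arg(h) is an integer multiple of 2π
  have hint : ∀ s, ∃ n : ℤ, ψ s - (Complex.log (h s)).im = 2 * π * n := by
    intro s
    have h1 : ((‖h s‖ : ℝ) : ℂ) * Complex.exp ((Complex.arg (h s) : ℂ) * Complex.I) = h s :=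
      Complex.norm_mul_exp_arg_mul_I (h s)
    have habs2 : ‖h s‖ = ‖α s - p‖ := by
      rw [hE s]
      rw [norm_mul, Complex.norm_exp_ofReal_mul_I, Complex.norm_real, Real.norm_eq_abs,
        abs_of_pos (habs s), mul_one]
    rw [habs2] at h1
    have h2 : Complex.exp ((ψ s : ℂ) * Complex.I) = Complex.exp ((Complex.arg (h s) : ℂ) * Complex.I) := by
      have := (hE s).symm.trans h1.symm
      exact mul_left_cancel₀ (by exact_mod_cast (habs s).ne') this
    obtain ⟨n, hn⟩ := Complex.exp_eq_exp_iff_exists_int.mp h2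
    refine ⟨n, ?_⟩
    rw [Complex.log_im]
    have := congrArg Complex.im hn
    have h5 : ψ s = (h s).arg + n*(2*π) := by simpa using this
    linarith
  -- crossing property at levels -(π/2) + 2πℤ
  have hcross : ∀ s₀ ∈ Set.Icc (0:ℝ) l, ψ s₀ ∈ {x : ℝ | ∃ n : ℤ, x = -(π/2) + 2*π*n} →
      ∃ δ > 0, ∀ t, |t - s₀| < δ → (t < s₀ → ψ t < ψ s₀) ∧ (s₀ < t → ψ s₀ < ψ t) := by
    intro s₀ _ hmem
    obtain ⟨n, hn⟩ := hmem
    set r : ℝ := ‖α s₀ - p‖ with hrdef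
    have hr : 0 < r := habs s₀
    have hcos : Real.cos (ψ s₀) = 0 := by
      rw [hn, show -(π/2) + 2*π*(n:ℝ) = -(π/2) + n*(2*π) by ring,
        Real.cos_add_int_mul_two_pi]
      simp
    have hsin : Real.sin (ψ s₀) = -1 := by
      rw [hn, show -(π/2) + 2*π*(n:ℝ) = -(π/2) + n*(2*π) by ring,
        Real.sin_add_int_mul_two_pi]
      simp
    have hh0 : h s₀ = -(r:ℂ) * Complex.I := by
      apply Complex.ext
      · rw [hre' s₀, hcos]; simp
      · rw [him' s₀, hsin]; simp [hrdef]
    have hslit : h s₀ ∈ Complex.slitPlane := by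
      rw [Complex.mem_slitPlane_iff]
      right
      rw [hh0]
      simp
      linarith
    have hlog : HasDerivAt (fun s => Complex.log (h s))
        ((1 + (k s₀ : ℂ) * (Complex.I * h s₀)) / h s₀) s₀ := (hh' s₀).clog_real hslit
    have hlogim : HasDerivAt (fun s => (Complex.log (h s)).im)
        (((1 + (k s₀ : ℂ) * (Complex.I * h s₀)) / h s₀).im) s₀ :=
      Complex.imCLM.hasFDerivAt.comp_hasDerivAt s₀ hlog
    have hval : (1 + (k s₀ : ℂ) * (Complex.I * h s₀)) / h s₀ =
        (((1 + k s₀ * r)/r : ℝ) : ℂ) * Complex.I := by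
      rw [div_eq_iff (hhne s₀), hh0]
      push_cast
      have hrne : (r:ℂ) ≠ 0 := by exact_mod_cast hr.ne'
      field_simp
      ring_nf
      simp [Complex.I_sq]
      ring
    have hD : (((1 + (k s₀ : ℂ) * (Complex.I * h s₀)) / h s₀).im) = (1 + k s₀ * r)/r := by
      rw [hval]; simp
    have hDpos : 0 < (((1 + (k s₀ : ℂ) * (Complex.I * h s₀)) / h s₀).im) := by
      rw [hD]
      have := hkpos s₀
      positivity
    have harg : ContinuousAt (fun s => (Complex.log (h s)).im) s₀ := by
      have h1 : ContinuousAt Complex.arg (h s₀) := Complex.continuousAt_arg hslit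
      have h2 : ContinuousAt (fun s => (h s).arg) s₀ := h1.comp hhc.continuousAt
      simpa [Complex.log_im] using h2
    set d : ℝ → ℝ := fun s => (ψ s - (Complex.log (h s)).im) / (2*π) with hddef
    have hdc : ContinuousAt d s₀ := (hψc.continuousAt.sub harg).div_const _
    have hdint : ∀ s, ∃ m : ℤ, d s = m := by
      intro s
      obtain ⟨m, hm'⟩ := hint s
      refine ⟨m, ?_⟩
      rw [hddef]
      simp only
      rw [hm']
      field_simp
    have hev : ∀ᶠ t in nhds s₀, d t = d s₀ := by
      have h1 := Metric.tendsto_nhds.mp hdc (1/2) (by norm_num)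
      filter_upwards [h1] with t ht
      obtain ⟨a, ha⟩ := hdint t
      obtain ⟨b, hb⟩ := hdint s₀
      rw [ha, hb, Real.dist_eq] at ht
      have habs2 := abs_lt.mp ht
      have h4 : a < b + 1 := by
        have : (a:ℝ) < (b:ℝ) + 1 := by linarith [habs2.2]
        exact_mod_cast this
      have h5 : b < a + 1 := by
        have : (b:ℝ) < (a:ℝ) + 1 := by linarith [habs2.1]
        exact_mod_cast this
      have : a = b := by omega
      rw [ha, hb, this]
    have hevψ : ψ =ᶠ[nhds s₀] (fun t => (Complex.log (h t)).im + 2*π*(d s₀)) := by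
      filter_upwards [hev] with t ht
      have h6 : ψ t = (Complex.log (h t)).im + 2*π * d t := by
        rw [hddef]
        simp only
        field_simp
        ring
      rw [h6, ht]
    have hψd : HasDerivAt ψ (((1 + (k s₀ : ℂ) * (Complex.I * h s₀)) / h s₀).im) s₀ :=
      (hlogim.add_const (2*π*(d s₀))).congr_of_eventuallyEq hevψ
    have hslope := hasDerivAt_iff_tendsto_slope.mp hψd
    have hev2 : ∀ᶠ t in nhdsWithin s₀ {s₀}ᶜ, 0 < slope ψ s₀ t :=
      hslope.eventually (eventually_gt_nhds hDpos)
    rw [eventually_nhdsWithin_iff] at hev2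
    obtain ⟨δ, hδ, hball⟩ := Metric.eventually_nhds_iff.mp hev2
    refine ⟨δ, hδ, fun t ht => ⟨fun hlt => ?_, fun hlt => ?_⟩⟩
    · have h7 := hball (show dist t s₀ < δ by rwa [Real.dist_eq]) (by simp [ne_of_lt hlt])
      rw [slope_def_field] at h7
      rcases div_pos_iff.mp h7 with ⟨h8, h9⟩ | ⟨h8, h9⟩
      · linarith
      · linarith
    · have h7 := hball (show dist t s₀ < δ by rwa [Real.dist_eq]) (by simp [ne_of_gt hlt])
      rw [slope_def_field] at h7
      rcases div_pos_iff.mp h7 with ⟨h8, h9⟩ | ⟨h8, h9⟩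
      · linarith
      · linarith
  -- apply the counting lemma
  have hml : ψ l = ψ 0 + 2*π*((rα - wα : ℤ) : ℝ) := by
    simp only [hψdef]
    push_cast
    linarith
  have hcount := counting ψ hψc l hl (-(π/2)) (rα - wα) hml hcross
  -- identify the two sets
  have hseteq : {s | s ∈ Set.Ico 0 l ∧ dotR (α s - p) (deriv α s) = 0 ∧ ρ s < 0}
      = {s ∈ Set.Ico 0 l | ∃ n : ℤ, ψ s = -(π/2) + 2*π*n} := by
    ext s
    simp only [Set.mem_setOf_eq, Set.sep_setOf, and_congr_right_iff]
    intro _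
    rw [← hre s, ← him s, hre' s, him' s]
    constructor
    · rintro ⟨h1, h2⟩
      have hc0 : Real.cos (ψ s) = 0 := by
        rcases mul_eq_zero.mp h1 with h' | h'
        · exact absurd h' (ne_of_gt (habs s))
        · exact h'
      have hs0 : Real.sin (ψ s) < 0 := by
        by_contra hcon
        push_neg at hcon
        nlinarith [habs s]
      have hs1 : Real.sin (ψ s) = -1 := by
        have hpyth := Real.sin_sq_add_cos_sq (ψ s)
        rw [hc0] at hpyth
        have h4 : (Real.sin (ψ s) - 1) * (Real.sin (ψ s) + 1) = 0 := by nlinarith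
        rcases mul_eq_zero.mp h4 with h' | h'
        · linarith
        · linarith
      obtain ⟨m, hm'⟩ := Real.sin_eq_neg_one_iff.mp hs1
      exact ⟨m, by rw [← hm']; ring⟩
    · rintro ⟨m, hm'⟩
      have hc0 : Real.cos (ψ s) = 0 := by
        rw [hm', show -(π/2) + 2*π*(m:ℝ) = -(π/2) + m*(2*π) by ring,
          Real.cos_add_int_mul_two_pi]
        simp
      have hs1 : Real.sin (ψ s) = -1 := by
        rw [hm', show -(π/2) + 2*π*(m:ℝ) = -(π/2) + m*(2*π) by ring,
          Real.sin_add_int_mul_two_pi]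
        simp
      constructor
      · rw [hc0]; ring
      · rw [hs1]
        have := habs s
        nlinarith
  rw [hseteq] at hmp
  rw [hmp] at *
  omega
end
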